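/- arXiv:0704.1859 — 4 statements merged into one kernel-verified Lean document; each statement's English description precedes it below -/
import Mathlib

section
/- Let f_n ≥ 0 for n ∈ ℕ and let f = Σ_{n=0}^∞ f_n χ_n be the corresponding radial function on the free group F. If A(f) = Σ_{n,m=0}^∞ f_n f_m q^{(n+m)/2} (1 + min(n,m)) < ∞, then for every finite subset E ⊆ F one has Σ_{x∈F} ((f∗χ_E)(x))² ≤ 4 · A(f) · |E|. (Equivalently, the convolution operator λ(f)g = f∗g is of weak type (2,2), with ‖λ(f)‖²_{2→(2,∞)} ≤ 4 A(f).) -/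
open scoped ENNReal

noncomputable section

def wlen {α : Type*} [DecidableEq α] (x : FreeGroup α) : ℕ := x.toWord.length

def conv {G : Type*} [Group G] (f g : G → ℝ≥0∞) (x : G) : ℝ≥0∞ :=
  ∑' y, f y * g (y⁻¹ * x)

def finInd {G : Type*} [DecidableEq G] (E : Finset G) (x : G) : ℝ≥0∞ :=
  if x ∈ E then 1 else 0

/-!
Expanding the square gives `∑ₓ (f∗χ_E)(x)² = ∑_{n,m} f_n f_m N(n,m)`, where `N(n,m)` counts the
triples `(x, z, w)` with `z, w ∈ E`, `|xz⁻¹| = n` and `|xw⁻¹| = m`; it suffices to show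
`N(n,m) ≤ 4 (1 + min(n,m)) q^⌊(n+m)/2⌋ |E|`. In the free group, `|zw⁻¹| = n + m - 2j` for some
`j ≤ min(n,m)`, and cancelling `xz⁻¹` against `zw⁻¹` sends `x` injectively to the sphere of
radius `j`, which has at most `(4/3) q^j` elements. For fixed `w`, an element `z` with
`|zw⁻¹| = k` and `|z| ≤ |w|` is a reduced word of some length `s ≤ k/2` that must not cancel a
letter fixed by `w`, followed by a tail fixed by `w`: there are at most
`∑_{s ≤ k/2} q^s ≤ (3/2) q^{k/2}` of them. Counting the pairs `(z, w)` by the shorter of the two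
gives the factor `2`, and `2 · (4/3) · (3/2) = 4`.
-/

open Finset

@[simp, norm_cast]
theorem ENat.toENNReal_sum {ι : Type*} (s : Finset ι) (f : ι → ℕ∞) :
    ((∑ i ∈ s, f i : ℕ∞) : ℝ≥0∞) = ∑ i ∈ s, (f i : ℝ≥0∞) :=
  map_sum ENat.toENNRealRingHom f s

theorem ENNReal.tsum_comp_eq_tsum_encard_mul {X β : Type*} (g : X → β) (F : β → ℝ≥0∞) :
    ∑' x, F (g x) = ∑' b, (g ⁻¹' {b}).encard * F b := by
  rw [← ENNReal.tsum_fiberwise _ g]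
  refine tsum_congr fun b => ?_
  rw [← ENNReal.tsum_set_const]
  exact tsum_congr fun x => congrArg F x.2

theorem Nat.two_mul_sum_range_pow_le {q : ℕ} (hq : 3 ≤ q) (S : ℕ) :
    2 * ∑ s ∈ range (S + 1), q ^ s ≤ 3 * q ^ S := by
  induction S with
  | zero => simp
  | succ S ih =>
    rw [sum_range_succ, mul_add, pow_succ]
    nlinarith [Nat.mul_le_mul_left (q ^ S) hq]

section Group

variable {G : Type*} [Group G] [DecidableEq G]

theorem conv_finInd (f : G → ℝ≥0∞) (E : Finset G) (x : G) :
    conv f (finInd E) x = ∑ z ∈ E, f (x * z⁻¹) := by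
  rw [conv, ← ((Equiv.inv G).trans (Equiv.mulLeft x)).tsum_eq]
  simp only [Equiv.trans_apply, Equiv.inv_apply, Equiv.coe_mulLeft, mul_inv_rev, inv_inv,
    inv_mul_cancel_right, finInd, mul_ite, mul_one, mul_zero]
  rw [tsum_eq_sum (s := E) (by simp_all), sum_ite_mem, inter_self]

theorem tsum_conv_finInd_sq (ℓ : G → ℕ) (a : ℕ → ℝ≥0∞) (E : Finset G) :
    ∑' x, conv (fun y => a (ℓ y)) (finInd E) x ^ 2 =
      ∑' p : ℕ × ℕ, a p.1 * a p.2 *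
        ∑ z ∈ E, ∑ w ∈ E, ({x | ℓ (x * z⁻¹) = p.1 ∧ ℓ (x * w⁻¹) = p.2}.encard : ℝ≥0∞) := by
  have hfiber (z w : G) : ∑' x, a (ℓ (x * z⁻¹)) * a (ℓ (x * w⁻¹)) = ∑' p : ℕ × ℕ,
      a p.1 * a p.2 * ({x | ℓ (x * z⁻¹) = p.1 ∧ ℓ (x * w⁻¹) = p.2}.encard : ℝ≥0∞) := by
    rw [ENNReal.tsum_comp_eq_tsum_encard_mul (fun x => (ℓ (x * z⁻¹), ℓ (x * w⁻¹)))
      (fun p => a p.1 * a p.2)]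
    simp only [mul_comm, Set.preimage, Set.mem_singleton_iff, Prod.ext_iff]
  simp_rw [conv_finInd, sq, sum_mul_sum, mul_sum,
    Summable.tsum_finsetSum fun _ _ => ENNReal.summable, hfiber]

end Group

namespace FreeGroup

section Words

variable {α : Type*}

theorem IsReduced.invRev {L : List (α × Bool)} (h : IsReduced L) : IsReduced (invRev L) := by
  rw [IsReduced, FreeGroup.invRev, List.isChain_reverse, List.isChain_map]
  exact h.imp fun a b hab hba => by simpa using (hab hba.symm).symm

theorem IsReduced.exists_cancel {L₁ L₂ : List (α × Bool)} (h₁ : IsReduced L₁)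
    (h₂ : IsReduced L₂) :
    ∃ u p v, L₁ = u ++ FreeGroup.invRev p ∧ L₂ = p ++ v ∧ IsReduced (u ++ v) := by
  induction L₁ using List.reverseRecOn generalizing L₂ with
  | nil => exact ⟨[], [], L₂, rfl, rfl, h₂⟩
  | append_singleton M a ih =>
    rcases L₂ with _ | ⟨b, T⟩
    · exact ⟨M ++ [a], [], [], by simp, rfl, by simpa using h₁⟩
    by_cases hab : a.1 = b.1 → a.2 = b.2
    · refine ⟨M ++ [a], [], b :: T, by simp, rfl, List.isChain_append.mpr ⟨h₁, h₂, ?_⟩⟩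
      simpa using hab
    · have hb : b = (a.1, !a.2) := by
        obtain ⟨a₁, a₂⟩ := a; obtain ⟨b₁, b₂⟩ := b
        cases a₂ <;> cases b₂ <;> simp_all
      obtain ⟨u, p, v, rfl, rfl, huv⟩ :=
        ih (h₁.infix ⟨[], [a], rfl⟩) (h₂.infix (L₁ := T) ⟨[b], [], by simp⟩)
      exact ⟨u, b :: p, v, by simp [hb, FreeGroup.invRev], rfl, huv⟩

variable [Fintype α] {q : ℕ}

theorem encard_isReduced_cons_le (hq : Fintype.card (α × Bool) = q + 1) (a : α × Bool)
    (n : ℕ) : {L : List (α × Bool) | L.length = n ∧ IsReduced (a :: L)}.encard ≤ (q : ℕ∞) ^ n := by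
  classical
  induction n generalizing a with
  | zero => simpa using Set.encard_le_encard (t := {[]}) fun L hL => by simpa using hL.1
  | succ n ih =>
    have hsub : {L : List (α × Bool) | L.length = n + 1 ∧ IsReduced (a :: L)} ⊆
        ⋃ b ∈ univ.erase (a.1, !a.2), (b :: ·) '' {L | L.length = n ∧ IsReduced (b :: L)} := by
      rintro (_ | ⟨b, L⟩) ⟨hlen, hred⟩
      · simp at hlen
      rw [isReduced_cons_cons] at hred
      refine Set.mem_biUnion (x := b) (mem_coe.mpr (mem_erase.mpr ⟨?_, mem_univ _⟩))
        ⟨L, ⟨by simpa using hlen, hred.2⟩, rfl⟩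
      rintro rfl
      simp at hred
    calc _ ≤ _ := Set.encard_le_encard hsub
      _ ≤ _ := set_encard_biUnion_le _ _
      _ ≤ ∑ _b ∈ univ.erase (a.1, !a.2), (q : ℕ∞) ^ n :=
        sum_le_sum fun b _ => (Set.encard_image_le _ _).trans (ih b)
      _ = (q : ℕ∞) ^ (n + 1) := by
        rw [sum_const, card_erase_of_mem (mem_univ _), card_univ, hq, nsmul_eq_mul, pow_succ']
        simp

theorem encard_isReduced_append_le (hq : Fintype.card (α × Bool) = q + 1)
    {v : List (α × Bool)} {n : ℕ} (hn : n ≤ v.length) :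
    {L : List (α × Bool) | L.length = n ∧ IsReduced (L ++ v)}.encard ≤ (q : ℕ∞) ^ n := by
  rcases v with _ | ⟨b, v⟩
  · simpa [Nat.le_zero.mp hn] using
      Set.encard_le_encard (t := {[]}) fun L hL => by simpa [Nat.le_zero.mp hn] using hL.1
  refine le_trans (Set.encard_le_encard_of_injOn (t := {L | L.length = n ∧
    IsReduced ((b.1, !b.2) :: L)}) ?_ invRev_injective.injOn) (encard_isReduced_cons_le hq _ n)
  rintro L ⟨hlen, hred⟩
  refine ⟨by simpa [invRev_length] using hlen, ?_⟩
  simpa [invRev] using (hred.infix (L₁ := L ++ [b]) ⟨[], v, by simp⟩).invRev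

end Words

variable {α : Type*} [DecidableEq α]

theorem norm_mk_of_isReduced {L : List (α × Bool)} (h : IsReduced L) :
    (mk L).norm = L.length := by
  rw [norm, toWord_mk, h.reduce_eq]

theorem norm_mul_inv_comm (z w : FreeGroup α) : (w * z⁻¹).norm = (z * w⁻¹).norm := by
  rw [← norm_inv_eq, mul_inv_rev, inv_inv]

theorem exists_toWord_mul (x y : FreeGroup α) :
    ∃ u p v, x.toWord = u ++ invRev p ∧ y.toWord = p ++ v ∧ (x * y).toWord = u ++ v := by
  obtain ⟨u, p, v, hx, hy, huv⟩ :=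
    (isReduced_toWord (x := x)).exists_cancel (isReduced_toWord (x := y))
  refine ⟨u, p, v, hx, hy, ?_⟩
  rw [← mk_toWord (x := x), ← mk_toWord (x := y), hx, hy, ← huv.reduce_eq, ← toWord_mk]
  simp only [← mul_mk, ← inv_mk]
  group

theorem mul_mk_eq_of_toWord_eq {x : FreeGroup α} {u p : List (α × Bool)}
    (h : x.toWord = u ++ invRev p) : x * mk p = mk u := by
  rw [← mk_toWord (x := x), h, ← mul_mk, ← inv_mk, inv_mul_cancel_right]

theorem encard_norm_mul_inv_pair_eq_le (z w : FreeGroup α) (n m : ℕ) :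
    {x : FreeGroup α | (x * z⁻¹).norm = n ∧ (x * w⁻¹).norm = m}.encard ≤
      ∑ j ∈ range (min n m + 1),
        if (z * w⁻¹).norm = n + m - 2 * j then {g : FreeGroup α | g.norm = j}.encard else 0 := by
  set t := z * w⁻¹
  -- `x z⁻¹ = u · p⁻¹` with `p` the prefix of `t` it cancels; then `x z⁻¹ p = u` has length `j`.
  have hsub : {x : FreeGroup α | (x * z⁻¹).norm = n ∧ (x * w⁻¹).norm = m} ⊆
      ⋃ j ∈ (range (min n m + 1)).filter (fun j => t.norm = n + m - 2 * j),
        (· * (z⁻¹ * mk (t.toWord.take (n - j)))) ⁻¹' {g | g.norm = j} := by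
    rintro x ⟨hn, hm⟩
    obtain ⟨u, p, v, hu, ht, hut⟩ := exists_toWord_mul (x * z⁻¹) t
    rw [show x * w⁻¹ = x * z⁻¹ * t by simp [t, mul_assoc]] at hm
    simp only [norm, hu, hut, List.length_append, invRev_length] at hn hm
    have hnorm : t.norm = p.length + v.length := by simp [norm, ht]
    refine Set.mem_biUnion (x := u.length)
      (mem_coe.mpr (mem_filter.mpr ⟨mem_range.mpr (by omega), by omega⟩)) ?_
    have hp : n - u.length = p.length := by omega
    have hured : IsReduced u :=
      (isReduced_toWord (x := x * z⁻¹)).infix ⟨[], invRev p, by simp [hu]⟩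
    show (x * (z⁻¹ * mk (t.toWord.take (n - u.length)))).norm = u.length
    rw [hp, ht, List.take_left, ← mul_assoc, mul_mk_eq_of_toWord_eq hu, norm_mk_of_isReduced hured]
  calc _ ≤ _ := Set.encard_le_encard hsub
    _ ≤ _ := set_encard_biUnion_le _ _
    _ = _ := by
      rw [sum_filter]
      simp only [Set.encard_preimage_of_bijective (Group.mulRight_bijective _)]

variable [Fintype α] {q : ℕ}

theorem encard_sphere_succ_le (hq : Fintype.card (α × Bool) = q + 1) (n : ℕ) :
    {x : FreeGroup α | x.norm = n + 1}.encard ≤ (q + 1 : ℕ∞) * q ^ n := by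
  have hsub : toWord '' {x : FreeGroup α | x.norm = n + 1} ⊆
      ⋃ a, (a :: ·) '' {L | L.length = n ∧ IsReduced (a :: L)} := by
    rintro _ ⟨x, hx, rfl⟩
    obtain ⟨a, L, hL⟩ := List.exists_cons_of_length_eq_add_one hx
    exact Set.mem_iUnion.mpr
      ⟨a, L, ⟨by simpa [norm, hL] using hx, hL ▸ isReduced_toWord⟩, hL.symm⟩
  calc _ = (toWord '' {x : FreeGroup α | x.norm = n + 1}).encard :=
        (toWord_injective.encard_image _).symm
    _ ≤ ∑ a, ((a :: ·) '' {L | L.length = n ∧ IsReduced (a :: L)}).encard :=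
        (Set.encard_le_encard hsub).trans (Set.encard_iUnion_le_of_fintype _)
    _ ≤ ∑ _a : α × Bool, (q : ℕ∞) ^ n :=
        sum_le_sum fun a _ => (Set.encard_image_le _ _).trans (encard_isReduced_cons_le hq a n)
    _ = (q + 1 : ℕ∞) * q ^ n := by
        rw [sum_const, card_univ, hq, nsmul_eq_mul]
        push_cast
        ring

theorem three_mul_encard_sphere_le (hq : Fintype.card (α × Bool) = q + 1) (hq3 : 3 ≤ q)
    (j : ℕ) : 3 * {x : FreeGroup α | x.norm = j}.encard ≤ 4 * (q : ℕ∞) ^ j := by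
  rcases j with _ | n
  · norm_num [norm_eq_zero]
  · calc 3 * {x : FreeGroup α | x.norm = n + 1}.encard ≤ 3 * ((q + 1) * q ^ n) := by
          gcongr
          exact encard_sphere_succ_le hq n
      _ ≤ 4 * q * q ^ n := by
          rw [← mul_assoc]
          exact mul_le_mul_left (by exact_mod_cast (by omega : 3 * (q + 1) ≤ 4 * q)) _
      _ = 4 * (q : ℕ∞) ^ (n + 1) := by ring

theorem encard_sphere_mul_two_mul_sum_le (hq : Fintype.card (α × Bool) = q + 1) (hq3 : 3 ≤ q)
    {j N : ℕ} (hj : j ≤ N) :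
    {x : FreeGroup α | x.norm = j}.encard * (2 * ∑ s ∈ range (N - j + 1), (q : ℕ∞) ^ s) ≤
      4 * q ^ N := by
  calc _ ≤ {x : FreeGroup α | x.norm = j}.encard * (3 * q ^ (N - j)) := by
        gcongr _ * ?_
        exact_mod_cast Nat.two_mul_sum_range_pow_le hq3 _
    _ = 3 * {x : FreeGroup α | x.norm = j}.encard * q ^ (N - j) := by ring
    _ ≤ 4 * q ^ j * q ^ (N - j) := by
        gcongr ?_ * _
        exact three_mul_encard_sphere_le hq hq3 j
    _ = 4 * q ^ N := by rw [mul_assoc, ← pow_add, Nat.add_sub_cancel' hj]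

theorem encard_norm_mul_inv_eq_and_norm_le_le (hq : Fintype.card (α × Bool) = q + 1)
    (w : FreeGroup α) (k : ℕ) :
    {z : FreeGroup α | (z * w⁻¹).norm = k ∧ z.norm ≤ w.norm}.encard ≤
      ∑ s ∈ range (k / 2 + 1), (q : ℕ∞) ^ s := by
  -- `z = u · p⁻¹` where `p` is the prefix of `w⁻¹` that `z` cancels, of length `|w| + |u| - k`.
  have hsub : {z : FreeGroup α | (z * w⁻¹).norm = k ∧ z.norm ≤ w.norm} ⊆
      ⋃ s ∈ (range (k / 2 + 1)).filter (fun s => k ≤ w.norm + s),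
        (fun u => mk (u ++ invRev (w⁻¹.toWord.take (w.norm + s - k)))) ''
          {u | u.length = s ∧ IsReduced (u ++ w⁻¹.toWord.drop (w.norm + s - k))} := by
    rintro z ⟨hk, hle⟩
    obtain ⟨u, p, v, hz, hw, hzw⟩ := exists_toWord_mul z w⁻¹
    have hk' : u.length + v.length = k := by rw [← hk, norm, hzw, List.length_append]
    have hz' : z.norm = u.length + p.length := by simp [norm, hz]
    have hw' : w.norm = p.length + v.length := by
      rw [← norm_inv_eq, norm, hw, List.length_append]
    refine Set.mem_biUnion (x := u.length)
      (mem_coe.mpr (mem_filter.mpr ⟨mem_range.mpr (by omega), by omega⟩)) ⟨u, ⟨rfl, ?_⟩, ?_⟩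
    all_goals rw [show w.norm + u.length - k = p.length by omega, hw]
    · simpa [← hzw] using isReduced_toWord
    · simp only [List.take_left, ← hz, mk_toWord]
  calc _ ≤ _ := Set.encard_le_encard hsub
    _ ≤ _ := set_encard_biUnion_le _ _
    _ ≤ ∑ s ∈ (range (k / 2 + 1)).filter (fun s => k ≤ w.norm + s), (q : ℕ∞) ^ s := by
      refine sum_le_sum fun s hs => (Set.encard_image_le _ _).trans
        (encard_isReduced_append_le hq ?_)
      simp only [mem_filter, mem_range] at hs
      rw [List.length_drop, ← norm, norm_inv_eq]
      omega
    _ ≤ _ := sum_le_sum_of_subset (filter_subset _ _)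

theorem card_filter_norm_mul_inv_eq_le (hq : Fintype.card (α × Bool) = q + 1)
    (E : Finset (FreeGroup α)) (k : ℕ) :
    (#{zw ∈ E ×ˢ E | (zw.1 * zw.2⁻¹).norm = k} : ℕ∞) ≤
      2 * (∑ s ∈ range (k / 2 + 1), (q : ℕ∞) ^ s) * #E := by
  set D := ∑ s ∈ range (k / 2 + 1), (q : ℕ∞) ^ s
  let P (z w : FreeGroup α) : Prop := (z * w⁻¹).norm = k ∧ z.norm ≤ w.norm
  have hP (w : FreeGroup α) : ∑ z ∈ E, (if P z w then 1 else 0 : ℕ∞) ≤ D := by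
    rw [sum_boole, ← Set.encard_coe_eq_coe_finsetCard]
    refine le_trans (Set.encard_le_encard fun z hz => ?_)
      (encard_norm_mul_inv_eq_and_norm_le_le hq w k)
    exact (mem_filter.mp hz).2
  have hsplit (z w : FreeGroup α) : (if (z * w⁻¹).norm = k then 1 else 0 : ℕ∞) ≤
      (if P z w then 1 else 0) + (if P w z then 1 else 0) := by
    by_cases hk : (z * w⁻¹).norm = k
    · rcases le_total z.norm w.norm with h | h
      · simp [P, hk, h]
      · simp [P, hk, h, norm_mul_inv_comm]
    · simp [hk]
  calc (#{zw ∈ E ×ˢ E | (zw.1 * zw.2⁻¹).norm = k} : ℕ∞)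
      = ∑ z ∈ E, ∑ w ∈ E, (if (z * w⁻¹).norm = k then 1 else 0 : ℕ∞) := by
        rw [← sum_boole, sum_product]
    _ ≤ ∑ z ∈ E, ∑ w ∈ E, ((if P z w then 1 else 0) + (if P w z then 1 else 0)) :=
        sum_le_sum fun z _ => sum_le_sum fun w _ => hsplit z w
    _ = ∑ w ∈ E, ∑ z ∈ E, (if P z w then 1 else 0 : ℕ∞) +
          ∑ z ∈ E, ∑ w ∈ E, (if P w z then 1 else 0 : ℕ∞) := by
        simp only [sum_add_distrib]
        rw [sum_comm]
    _ ≤ ∑ _w ∈ E, D + ∑ _z ∈ E, D :=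
        add_le_add (sum_le_sum fun w _ => hP w) (sum_le_sum fun z _ => hP z)
    _ = 2 * D * #E := by
        simp only [sum_const, nsmul_eq_mul]
        ring

theorem sum_sum_encard_norm_mul_inv_pair_eq_le (hq : Fintype.card (α × Bool) = q + 1)
    (hq3 : 3 ≤ q) (E : Finset (FreeGroup α)) (n m : ℕ) :
    ∑ z ∈ E, ∑ w ∈ E, {x : FreeGroup α | (x * z⁻¹).norm = n ∧ (x * w⁻¹).norm = m}.encard ≤
      4 * (min n m + 1) * (q : ℕ∞) ^ ((n + m) / 2) * #E := by
  let S (j : ℕ) : ℕ∞ := {g : FreeGroup α | g.norm = j}.encard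
  calc _ ≤ ∑ z ∈ E, ∑ w ∈ E, ∑ j ∈ range (min n m + 1),
        if (z * w⁻¹).norm = n + m - 2 * j then S j else 0 :=
        sum_le_sum fun z _ => sum_le_sum fun w _ => encard_norm_mul_inv_pair_eq_le z w n m
    _ = ∑ j ∈ range (min n m + 1),
          S j * #{zw ∈ E ×ˢ E | (zw.1 * zw.2⁻¹).norm = n + m - 2 * j} := by
        simp only [← sum_boole, mul_sum, mul_ite, mul_one, mul_zero, sum_product]
        rw [sum_congr rfl fun z _ => sum_comm, sum_comm]
    _ ≤ ∑ j ∈ range (min n m + 1),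
          S j * (2 * (∑ s ∈ range ((n + m - 2 * j) / 2 + 1), (q : ℕ∞) ^ s) * #E) := by
        gcongr with j
        exact card_filter_norm_mul_inv_eq_le hq E _
    _ ≤ ∑ _j ∈ range (min n m + 1), 4 * (q : ℕ∞) ^ ((n + m) / 2) * #E := by
        refine sum_le_sum fun j hj => ?_
        rw [mem_range] at hj
        rw [show (n + m - 2 * j) / 2 = (n + m) / 2 - j by omega, ← mul_assoc]
        gcongr ?_ * _
        exact encard_sphere_mul_two_mul_sum_le hq hq3 (by omega)
    _ = 4 * (min n m + 1) * (q : ℕ∞) ^ ((n + m) / 2) * #E := by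
        rw [sum_const, card_range, nsmul_eq_mul]
        push_cast
        ring

end FreeGroup

theorem wlen_eq_norm {α : Type*} [DecidableEq α] : (wlen : FreeGroup α → ℕ) = FreeGroup.norm :=
  rfl

theorem radial_weak_type_two_two_upper_general
    (r : ℕ) (hr : 2 ≤ r) (q : ℕ) (hq : q = 2 * r - 1)
    (a : ℕ → ℝ)
    (A : ℝ≥0∞)
    (hA : A = ∑' p : ℕ × ℕ,
        ENNReal.ofReal (a p.1) * ENNReal.ofReal (a p.2) *
          (q : ℝ≥0∞) ^ ((((p.1 : ℝ) + (p.2 : ℝ))) / 2) *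
          ((1 + min p.1 p.2 : ℕ) : ℝ≥0∞))
    (E : Finset (FreeGroup (Fin r))) :
    ∑' x : FreeGroup (Fin r),
        (conv (fun y => ENNReal.ofReal (a (wlen y))) (finInd E) x) ^ 2
      ≤ 4 * A * (E.card : ℝ≥0∞) := by
  have hcard : Fintype.card (Fin r × Bool) = q + 1 := by
    rw [Fintype.card_prod, Fintype.card_fin, Fintype.card_bool]; omega
  have hcount (n m : ℕ) := ENat.toENNReal_le.mpr
    (FreeGroup.sum_sum_encard_norm_mul_inv_pair_eq_le hcard (by omega) E n m)
  have hpow (n m : ℕ) : (q : ℝ≥0∞) ^ ((n + m) / 2) ≤ (q : ℝ≥0∞) ^ (((n : ℝ) + m) / 2) := by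
    rw [← ENNReal.rpow_natCast]
    refine ENNReal.rpow_le_rpow_of_exponent_le (by exact_mod_cast (by omega : 1 ≤ q)) ?_
    exact Nat.cast_div_le.trans (by push_cast; rfl)
  push_cast at hcount
  rw [wlen_eq_norm, tsum_conv_finInd_sq _ (fun n => ENNReal.ofReal (a n)), hA,
    ← ENNReal.tsum_mul_left, ← ENNReal.tsum_mul_right]
  refine ENNReal.tsum_le_tsum fun p => ?_
  grw [hcount p.1 p.2, hpow p.1 p.2]
  push_cast
  exact le_of_eq (by ring)

/-- If `A(f) = Σ_{n,m} f_n f_m q^{(n+m)/2} (1 + min(n,m)) < ∞`, then for every finite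
subset `E` of the free group, `Σ_x ((f∗χ_E)(x))² ≤ 4 A(f) |E|`, where
`f = Σ_n f_n χ_n` is the radial function with nonnegative coefficients `f_n`. -/
theorem radial_weak_type_two_two_upper
    (r : ℕ) (hr : 2 ≤ r) (q : ℕ) (hq : q = 2 * r - 1)
    (a : ℕ → ℝ) (ha : ∀ n, 0 ≤ a n)
    (A : ℝ≥0∞)
    (hA : A = ∑' p : ℕ × ℕ,
        ENNReal.ofReal (a p.1) * ENNReal.ofReal (a p.2) *
          (q : ℝ≥0∞) ^ ((((p.1 : ℝ) + (p.2 : ℝ))) / 2) *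
          ((1 + min p.1 p.2 : ℕ) : ℝ≥0∞))
    (hAfin : A ≠ ∞)
    (E : Finset (FreeGroup (Fin r))) :
    ∑' x : FreeGroup (Fin r),
        (conv (fun y => ENNReal.ofReal (a (wlen y))) (finInd E) x) ^ 2
      ≤ 4 * A * (E.card : ℝ≥0∞) :=
  radial_weak_type_two_two_upper_general r hr q hq a A hA E
end
end

section
/- Let f_n ≥ 0 for n ∈ ℕ and let f = Σ_{n=0}^∞ f_n χ_n be the corresponding radial function on the free group F. If there is a constant C such that Σ_{x∈F} ((f∗χ_E)(x))² ≤ C · |E| for every finite nonempty subset E ⊆ F, then A(f) = Σ_{n,m=0}^∞ f_n f_m q^{(n+m)/2} (1 + min(n,m)) ≤ 6C. In particular, if the radial convolution operator λ(f) with nonnegative coefficients is of weak type (2,2) then A(f) < ∞, and (1/6) A(f) ≤ ‖λ(f)‖²_{2→(2,∞)}. -/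
open scoped ENNReal

noncomputable section

/-!
Test the hypothesis on the ball `E = B_{K+1}`, which has at most `3 r q^K` elements. If
`|x| = K + 1 - d` and `d ≤ n ≤ K` with `n ≡ d [MOD 2]`, at least `q^((n+d)/2)` elements `y` of
length `n` satisfy `y⁻¹ x ∈ E`: follow the reduced word of `x` for `(n-d)/2` letters, then branch
off freely. With `c n = f n q^(n/2)` and `W d = ∑ c n` over these `n`, summing `(f ∗ χ_E)²` over
the spheres `S_{K+1-d}` gives `2 r q^K ∑_d (W d)² ≤ C |E| ≤ 3 C r q^K`. Finally
`∑_{n,m ≤ K} (1 + min n m) c n c m = ∑_j (W j + W (j+1))² ≤ 4 ∑_j (W j)² ≤ 6 C`.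
-/

open Finset

theorem sum_le_conv_finInd {G : Type*} [Group G] [DecidableEq G] (f : G → ℝ≥0∞) (E : Finset G)
    (x : G) {Y : Finset G} (hY : ∀ y ∈ Y, y⁻¹ * x ∈ E) :
    ∑ y ∈ Y, f y ≤ conv f (finInd E) x :=
  calc ∑ y ∈ Y, f y = ∑ y ∈ Y, f y * finInd E (y⁻¹ * x) :=
        sum_congr rfl fun y hy => by simp [finInd, hY y hy]
    _ ≤ conv f (finInd E) x := ENNReal.sum_le_tsum Y

theorem ENNReal.add_sq_le (a b : ℝ≥0∞) : (a + b) ^ 2 ≤ 2 * (a ^ 2 + b ^ 2) := by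
  rcases eq_or_ne a ⊤ with rfl | ha
  · simp
  rcases eq_or_ne b ⊤ with rfl | hb
  · simp
  lift a to NNReal using ha
  lift b to NNReal using hb
  exact_mod_cast _root_.add_sq_le (a := a) (b := b)

theorem ENNReal.pow_add_div_two_eq_rpow_mul_rpow (x : ℝ≥0∞) {m n : ℕ} (h : m % 2 = n % 2) :
    x ^ ((m + n) / 2) = x ^ ((m : ℝ) / 2) * x ^ ((n : ℝ) / 2) := by
  rw [← ENNReal.rpow_add_of_nonneg _ _ (by positivity) (by positivity), ← ENNReal.rpow_natCast,
    Nat.cast_div (by omega) two_ne_zero]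
  push_cast
  ring_nf

theorem Finset.exists_subset_range_product (s : Finset (ℕ × ℕ)) :
    ∃ K, s ⊆ range (K + 1) ×ˢ range (K + 1) := by
  obtain ⟨K₁, h₁⟩ := exists_nat_subset_range (s.image Prod.fst)
  obtain ⟨K₂, h₂⟩ := exists_nat_subset_range (s.image Prod.snd)
  refine ⟨K₁ + K₂, fun p hp => mem_product.mpr ⟨?_, ?_⟩⟩
  · have := mem_range.mp (h₁ (mem_image_of_mem Prod.fst hp))
    exact mem_range.mpr (by omega)
  · have := mem_range.mp (h₂ (mem_image_of_mem Prod.snd hp))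
    exact mem_range.mpr (by omega)

section TailSums

variable {R : Type*}

def parityTailSum [AddCommMonoid R] (c : ℕ → R) (M j : ℕ) : R :=
  ∑ n ∈ Ico j M with n % 2 = j % 2, c n

theorem sum_Ico_eq_parityTailSum_add [AddCommMonoid R] (c : ℕ → R) (M j : ℕ) :
    ∑ n ∈ Ico j M, c n = parityTailSum c M j + parityTailSum c M (j + 1) := by
  rw [parityTailSum, parityTailSum, ← sum_filter_add_sum_filter_not _ (fun n => n % 2 = j % 2)]
  congr 2
  ext n
  simp only [mem_filter, mem_Ico]
  omega

theorem sum_one_add_min_mul_eq_sum_sq [CommSemiring R] (c : ℕ → R) (M : ℕ) :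
    ∑ n ∈ range M, ∑ m ∈ range M, ((1 + min n m : ℕ) : R) * (c n * c m) =
      ∑ j ∈ range M, (∑ n ∈ Ico j M, c n) ^ 2 := by
  have hIco : ∀ j, ∑ n ∈ Ico j M, c n = ∑ n ∈ range M, if j ≤ n then c n else 0 := by
    intro j
    rw [← sum_filter]
    congr 1
    ext n
    simp only [mem_Ico, mem_filter, mem_range]
    tauto
  have hcount : ∀ n ∈ range M, ∀ m ∈ range M,
      ((1 + min n m : ℕ) : R) = ∑ j ∈ range M, if j ≤ n ∧ j ≤ m then 1 else 0 := by
    intro n hn m hm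
    rw [sum_boole, ← card_range (1 + min n m)]
    congr 2
    ext j
    simp only [mem_range, mem_filter] at hn hm ⊢
    omega
  simp_rw [hIco, sq, sum_mul_sum]
  conv_rhs => rw [sum_comm]
  refine sum_congr rfl fun n hn => ?_
  conv_rhs => rw [sum_comm]
  refine sum_congr rfl fun m hm => ?_
  rw [hcount n hn m hm, sum_mul]
  refine sum_congr rfl fun j _ => ?_
  by_cases hjn : j ≤ n <;> by_cases hjm : j ≤ m <;> simp [hjn, hjm]

theorem sum_sq_sum_Ico_le_four_mul (c : ℕ → ℝ≥0∞) (M : ℕ) :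
    ∑ j ∈ range M, (∑ n ∈ Ico j M, c n) ^ 2 ≤ 4 * ∑ j ∈ range M, parityTailSum c M j ^ 2 := by
  set W := fun j => parityTailSum c M j ^ 2
  have hshift : ∑ j ∈ range M, W (j + 1) ≤ ∑ j ∈ range M, W j :=
    calc ∑ j ∈ range M, W (j + 1) ≤ ∑ j ∈ range (M + 1), W j := by
          rw [sum_range_succ']
          exact le_self_add
      _ = ∑ j ∈ range M, W j := by simp [sum_range_succ, W, parityTailSum]
  calc ∑ j ∈ range M, (∑ n ∈ Ico j M, c n) ^ 2 ≤ ∑ j ∈ range M, 2 * (W j + W (j + 1)) :=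
        sum_le_sum fun j _ => by
          rw [sum_Ico_eq_parityTailSum_add]
          exact ENNReal.add_sq_le _ _
    _ = 2 * (∑ j ∈ range M, W j + ∑ j ∈ range M, W (j + 1)) := by
        rw [← mul_sum, sum_add_distrib]
    _ ≤ 2 * (∑ j ∈ range M, W j + ∑ j ∈ range M, W j) := by grw [hshift]
    _ = 4 * ∑ j ∈ range M, W j := by ring

end TailSums

namespace FreeGroup

variable {α : Type*}

theorem isReduced_toList_append_cons {o : Option (α × Bool)} {d : α × Bool}
    {w : List (α × Bool)} :
    IsReduced (o.toList ++ d :: w) ↔ (∀ c ∈ o, c.1 = d.1 → c.2 = d.2) ∧ IsReduced (d :: w) := by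
  cases o <;> simp [isReduced_cons_cons]

variable [DecidableEq α]

theorem IsReduced.toWord_mk {L : List (α × Bool)} (h : IsReduced L) : (mk L).toWord = L :=
  FreeGroup.toWord_mk.trans h.reduce_eq

theorem IsReduced.norm_mk {L : List (α × Bool)} (h : IsReduced L) : norm (mk L) = L.length :=
  congrArg List.length h.toWord_mk

theorem exists_norm_eq_norm_inv_mul_le {x : FreeGroup α} {t u : ℕ} (h : norm x = t + u) :
    ∃ p : FreeGroup α, norm p = t ∧ norm (p⁻¹ * x) ≤ u := by
  have hx : x.toWord.length = t + u := h
  refine ⟨mk (x.toWord.take t), ?_, ?_⟩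
  · rw [(isReduced_toWord.infix (List.take_prefix t _).isInfix).norm_mk, List.length_take]
    omega
  · have : (mk (x.toWord.take t))⁻¹ * x = mk (x.toWord.drop t) := by
      rw [inv_mul_eq_iff_eq_mul, mul_mk, List.take_append_drop, mk_toWord]
    rw [this]
    exact norm_mk_le.trans (by rw [List.length_drop]; omega)

variable [Fintype α]

def reducedWordsAfter : Option (α × Bool) → ℕ → Finset (List (α × Bool))
  | _, 0 => {[]}
  | o, s + 1 => ({d : α × Bool | ∀ c ∈ o, c.1 = d.1 → c.2 = d.2} : Finset _).biUnion
      fun d => (reducedWordsAfter (some d) s).image (d :: ·)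

theorem mem_reducedWordsAfter {o : Option (α × Bool)} {s : ℕ} {w : List (α × Bool)} :
    w ∈ reducedWordsAfter o s ↔ w.length = s ∧ IsReduced (o.toList ++ w) := by
  induction s generalizing o w with
  | zero =>
    cases o <;> cases w <;> simp [reducedWordsAfter, IsReduced.nil, IsReduced.singleton]
  | succ s ih =>
    cases w with
    | nil => simp [reducedWordsAfter]
    | cons d w =>
      simp only [reducedWordsAfter, mem_biUnion, mem_filter, mem_univ, true_and, mem_image,
        List.cons.injEq, ih, List.length_cons, isReduced_toList_append_cons, Option.toList_some,
        List.singleton_append]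
      constructor
      · rintro ⟨_, hd, _, ⟨rfl, hw⟩, rfl, rfl⟩
        exact ⟨rfl, hd, hw⟩
      · rintro ⟨hl, hd, hw⟩
        exact ⟨d, hd, w, ⟨by omega, hw⟩, rfl, rfl⟩

theorem card_reducedWordsAfter_succ {o : Option (α × Bool)} {s k : ℕ}
    (h : ∀ d : α × Bool, #(reducedWordsAfter (some d) s) = k) :
    #(reducedWordsAfter o (s + 1)) =
      #({d : α × Bool | ∀ c ∈ o, c.1 = d.1 → c.2 = d.2} : Finset _) * k := by
  rw [reducedWordsAfter, card_biUnion, sum_congr rfl fun d _ => ?_, sum_const, smul_eq_mul]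
  · rw [card_image_of_injective _ List.cons_injective, h]
  · intro d _ d' _ hne
    simp only [Function.onFun, disjoint_left, mem_image]
    rintro _ ⟨w, -, rfl⟩ ⟨w', -, hw⟩
    exact hne (List.cons_eq_cons.mp hw).1.symm

theorem card_reducedWordsAfter_some (c : α × Bool) (s : ℕ) :
    #(reducedWordsAfter (some c) s) = (2 * Fintype.card α - 1) ^ s := by
  induction s generalizing c with
  | zero => simp [reducedWordsAfter]
  | succ s ih =>
    rw [card_reducedWordsAfter_succ ih, pow_succ']
    have : ({d : α × Bool | ∀ c' ∈ some c, c'.1 = d.1 → c'.2 = d.2} : Finset _) =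
        univ.erase (c.1, !c.2) := by
      obtain ⟨a, b⟩ := c
      ext ⟨a', b'⟩
      cases b <;> cases b' <;> simp [eq_comm (a := a')]
    rw [this, card_erase_of_mem (mem_univ _), card_univ, Fintype.card_prod, Fintype.card_bool,
      mul_comm (Fintype.card α)]

theorem card_reducedWordsAfter_none (s : ℕ) :
    #(reducedWordsAfter (α := α) none (s + 1)) =
      2 * Fintype.card α * (2 * Fintype.card α - 1) ^ s := by
  rw [card_reducedWordsAfter_succ (card_reducedWordsAfter_some · s), filter_true_of_mem (by simp),
    card_univ, Fintype.card_prod, Fintype.card_bool, mul_comm (Fintype.card α)]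

def sphere (n : ℕ) : Finset (FreeGroup α) := (reducedWordsAfter none n).image mk

theorem mem_sphere {x : FreeGroup α} {n : ℕ} : x ∈ sphere n ↔ norm x = n := by
  simp only [sphere, mem_image, mem_reducedWordsAfter, Option.toList_none, List.nil_append]
  constructor
  · rintro ⟨w, ⟨rfl, hw⟩, rfl⟩
    exact hw.norm_mk
  · rintro rfl
    exact ⟨x.toWord, ⟨rfl, isReduced_toWord⟩, mk_toWord⟩

theorem card_sphere (n : ℕ) : #(sphere (α := α) n) = #(reducedWordsAfter (α := α) none n) := by
  refine card_image_of_injOn fun w hw w' hw' h => ?_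
  have hred {v} (hv : v ∈ reducedWordsAfter (α := α) none n) : IsReduced v := by
    simpa using (mem_reducedWordsAfter.mp hv).2
  rw [← (hred hw).toWord_mk, ← (hred hw').toWord_mk, h]

theorem card_sphere_succ (n : ℕ) :
    #(sphere (α := α) (n + 1)) = 2 * Fintype.card α * (2 * Fintype.card α - 1) ^ n := by
  rw [card_sphere, card_reducedWordsAfter_none]

def ball (N : ℕ) : Finset (FreeGroup α) := (range (N + 1)).biUnion sphere

theorem mem_ball {x : FreeGroup α} {N : ℕ} : x ∈ ball N ↔ norm x ≤ N := by
  simp [ball, mem_sphere]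

theorem ball_succ (N : ℕ) : ball (α := α) (N + 1) = ball N ∪ sphere (N + 1) := by
  rw [ball, range_add_one, biUnion_insert, union_comm, ball]

theorem card_ball_succ_le (hα : 2 ≤ Fintype.card α) (N : ℕ) :
    #(ball (α := α) (N + 1)) ≤ 3 * Fintype.card α * (2 * Fintype.card α - 1) ^ N := by
  induction N with
  | zero =>
    have : #(sphere (α := α) 0) = 1 := by simp [card_sphere, reducedWordsAfter]
    grw [ball_succ, card_union_le, ball, range_one, singleton_biUnion, this, card_sphere_succ]
    simp only [pow_zero, mul_one]
    omega
  | succ N ih =>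
    grw [ball_succ, card_union_le, ih, card_sphere_succ, pow_succ]
    have : 3 ≤ 2 * Fintype.card α - 1 := by omega
    nlinarith [Nat.zero_le ((2 * Fintype.card α - 1) ^ N), Nat.zero_le (Fintype.card α)]

section Nonempty

variable [Nonempty α]

theorem exists_card_eq_norm_mul_eq_add (g : FreeGroup α) (s : ℕ) :
    ∃ Z : Finset (FreeGroup α), #Z = (2 * Fintype.card α - 1) ^ s ∧
      ∀ z ∈ Z, norm z = s ∧ norm (g * z) = norm g + s := by
  obtain ⟨c, hc⟩ : ∃ c : α × Bool, ∀ d ∈ g.toWord.getLast?, d = c := by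
    cases g.toWord.getLast? with
    | none => exact ⟨(Classical.arbitrary α, true), by simp⟩
    | some d => exact ⟨d, by simp⟩
  have hred {w} (hw : w ∈ reducedWordsAfter (some c) s) :
      IsReduced w ∧ IsReduced (g.toWord ++ w) := by
    have hcw : IsReduced (c :: w) := by simpa using (mem_reducedWordsAfter.mp hw).2
    refine ⟨List.IsChain.tail hcw, List.isChain_append.mpr
      ⟨isReduced_toWord, List.IsChain.tail hcw, fun a ha b hb => ?_⟩⟩
    rw [hc a ha]
    cases w with
    | nil => simp at hb
    | cons b' w =>
      obtain rfl : b' = b := by simpa using hb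
      exact (isReduced_cons_cons.mp hcw).1
  refine ⟨(reducedWordsAfter (some c) s).image mk, ?_, ?_⟩
  · rw [card_image_of_injOn, card_reducedWordsAfter_some]
    intro w hw w' hw' h
    rw [← (hred hw).1.toWord_mk, ← (hred hw').1.toWord_mk, h]
  · simp only [mem_image]
    rintro _ ⟨w, hw, rfl⟩
    have hlen := (mem_reducedWordsAfter.mp hw).1
    have hmul : g * mk w = mk (g.toWord ++ w) := by rw [← mul_mk, mk_toWord]
    rw [hmul, (hred hw).1.norm_mk, (hred hw).2.norm_mk, List.length_append, hlen]
    exact ⟨rfl, rfl⟩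

theorem exists_card_eq_norm_eq_norm_inv_mul_le {x : FreeGroup α} {t u : ℕ}
    (h : norm x = t + u) (s : ℕ) :
    ∃ Y : Finset (FreeGroup α), #Y = (2 * Fintype.card α - 1) ^ s ∧
      ∀ y ∈ Y, norm y = t + s ∧ norm (y⁻¹ * x) ≤ s + u := by
  obtain ⟨p, hp, hpx⟩ := exists_norm_eq_norm_inv_mul_le h
  obtain ⟨Z, hZ, hZnorm⟩ := exists_card_eq_norm_mul_eq_add p s
  refine ⟨Z.image (p * ·), by rw [card_image_of_injective _ (mul_right_injective p), hZ], ?_⟩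
  simp only [mem_image]
  rintro _ ⟨z, hz, rfl⟩
  obtain ⟨hz, hpz⟩ := hZnorm z hz
  refine ⟨hp ▸ hpz, ?_⟩
  calc norm ((p * z)⁻¹ * x) = norm (z⁻¹ * (p⁻¹ * x)) := by rw [mul_inv_rev, mul_assoc]
    _ ≤ norm z⁻¹ + norm (p⁻¹ * x) := norm_mul_le _ _
    _ ≤ s + u := by rw [norm_inv_eq, hz]; omega

theorem sum_mul_pow_le_conv_ball (b : ℕ → ℝ≥0∞) {K d : ℕ} {x : FreeGroup α}
    (hx : norm x + d = K + 1) :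
    ∑ n ∈ Ico d (K + 1) with n % 2 = d % 2,
        b n * ((2 * Fintype.card α - 1 : ℕ) : ℝ≥0∞) ^ ((n + d) / 2) ≤
      conv (fun y => b (norm y)) (finInd (ball (K + 1))) x := by
  set S := {n ∈ Ico d (K + 1) | n % 2 = d % 2}
  have hY : ∀ n ∈ S, ∃ Y : Finset (FreeGroup α),
      #Y = (2 * Fintype.card α - 1) ^ ((n + d) / 2) ∧
        ∀ y ∈ Y, norm y = n ∧ y⁻¹ * x ∈ ball (K + 1) := by
    intro n hn
    simp only [S, mem_filter, mem_Ico] at hn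
    obtain ⟨Y, hcard, hY⟩ := exists_card_eq_norm_eq_norm_inv_mul_le (x := x)
      (t := (n - d) / 2) (u := norm x - (n - d) / 2) (by omega) ((n + d) / 2)
    refine ⟨Y, hcard, fun y hy => ?_⟩
    obtain ⟨hy, hyx⟩ := hY y hy
    exact ⟨by omega, mem_ball.mpr (by omega)⟩
  choose! Y hcard hY using hY
  have hdisj : (S : Set ℕ).PairwiseDisjoint Y := fun n hn m hm hnm =>
    disjoint_left.mpr fun y hyn hym => hnm ((hY n hn y hyn).1.symm.trans (hY m hm y hym).1)
  calc ∑ n ∈ S, b n * ((2 * Fintype.card α - 1 : ℕ) : ℝ≥0∞) ^ ((n + d) / 2)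
      = ∑ n ∈ S, ∑ y ∈ Y n, b (norm y) := sum_congr rfl fun n hn => by
        rw [sum_congr rfl fun y hy => congrArg b (hY n hn y hy).1, sum_const, hcard n hn,
          nsmul_eq_mul, mul_comm, Nat.cast_pow]
    _ = ∑ y ∈ S.biUnion Y, b (norm y) := (sum_biUnion hdisj).symm
    _ ≤ _ := sum_le_conv_finInd _ _ _ fun y hy => by
        obtain ⟨n, hn, hy⟩ := mem_biUnion.mp hy
        exact (hY n hn y hy).2

theorem mul_sq_parityTailSum_le_sum_sphere (b : ℕ → ℝ≥0∞) {K d : ℕ} (hd : d ≤ K) :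
    2 * Fintype.card α * ((2 * Fintype.card α - 1 : ℕ) : ℝ≥0∞) ^ K *
        parityTailSum (fun n => b n * ((2 * Fintype.card α - 1 : ℕ) : ℝ≥0∞) ^ ((n : ℝ) / 2))
          (K + 1) d ^ 2 ≤
      ∑ x ∈ sphere (α := α) (K - d + 1),
        conv (fun y => b (norm y)) (finInd (ball (K + 1))) x ^ 2 := by
  set Q : ℝ≥0∞ := ((2 * Fintype.card α - 1 : ℕ) : ℝ≥0∞)
  set W := parityTailSum (fun n => b n * Q ^ ((n : ℝ) / 2)) (K + 1) d
  have hconv : ∀ x ∈ sphere (α := α) (K - d + 1),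
      Q ^ ((d : ℝ) / 2) * W ≤ conv (fun y => b (norm y)) (finInd (ball (K + 1))) x := by
    intro x hx
    have hx : norm x + d = K + 1 := by rw [mem_sphere.mp hx]; omega
    refine le_of_eq_of_le ?_ (sum_mul_pow_le_conv_ball b hx)
    simp only [W, parityTailSum, mul_sum]
    refine sum_congr rfl fun n hn => ?_
    rw [ENNReal.pow_add_div_two_eq_rpow_mul_rpow _ (mem_filter.mp hn).2]
    ring
  have hsq : (Q ^ ((d : ℝ) / 2)) ^ 2 = Q ^ d := by
    rw [← ENNReal.rpow_natCast, ← ENNReal.rpow_mul, ← ENNReal.rpow_natCast]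
    congr 1
    push_cast
    ring
  calc 2 * Fintype.card α * Q ^ K * W ^ 2
      = #(sphere (K - d + 1)) • (Q ^ ((d : ℝ) / 2) * W) ^ 2 := by
        rw [nsmul_eq_mul, card_sphere_succ, mul_pow, hsq]
        conv_lhs => rw [← Nat.sub_add_cancel hd, pow_add]
        simp only [Nat.cast_mul, Nat.cast_pow, Nat.cast_ofNat, Q]
        ring
    _ ≤ _ := card_nsmul_le_sum _ _ _ fun x hx => pow_le_pow_left' (hconv x hx) 2

theorem mul_sum_sq_parityTailSum_le_tsum (b : ℕ → ℝ≥0∞) (K : ℕ) :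
    2 * Fintype.card α * ((2 * Fintype.card α - 1 : ℕ) : ℝ≥0∞) ^ K *
        ∑ d ∈ range (K + 1), parityTailSum
          (fun n => b n * ((2 * Fintype.card α - 1 : ℕ) : ℝ≥0∞) ^ ((n : ℝ) / 2)) (K + 1) d ^ 2 ≤
      ∑' x, conv (fun y => b (norm y)) (finInd (ball (α := α) (K + 1))) x ^ 2 := by
  have hdisj : (range (K + 1) : Set ℕ).PairwiseDisjoint fun d => sphere (α := α) (K - d + 1) :=
    fun d hd d' hd' hne => disjoint_left.mpr fun x h h' => hne <| by
      have := mem_sphere.mp h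
      have := mem_sphere.mp h'
      simp only [coe_range, Set.mem_Iio] at hd hd'
      omega
  rw [mul_sum]
  calc _ ≤ ∑ d ∈ range (K + 1), ∑ x ∈ sphere (K - d + 1),
        conv (fun y => b (norm y)) (finInd (ball (K + 1))) x ^ 2 :=
        sum_le_sum fun d hd =>
          mul_sq_parityTailSum_le_sum_sphere b (Nat.le_of_lt_succ (mem_range.mp hd))
    _ = ∑ x ∈ (range (K + 1)).biUnion fun d => sphere (K - d + 1),
        conv (fun y => b (norm y)) (finInd (ball (K + 1))) x ^ 2 := (sum_biUnion hdisj).symm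
    _ ≤ _ := ENNReal.sum_le_tsum _

end Nonempty

theorem two_mul_sum_sq_parityTailSum_le (hα : 2 ≤ Fintype.card α) (b : ℕ → ℝ≥0∞) (C : ℝ≥0∞)
    (hweak : ∀ E : Finset (FreeGroup α), E.Nonempty →
      ∑' x, conv (fun y => b (norm y)) (finInd E) x ^ 2 ≤ C * #E) (K : ℕ) :
    2 * ∑ d ∈ range (K + 1), parityTailSum
        (fun n => b n * ((2 * Fintype.card α - 1 : ℕ) : ℝ≥0∞) ^ ((n : ℝ) / 2)) (K + 1) d ^ 2 ≤
      3 * C := by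
  have : Nonempty α := Fintype.card_pos_iff.mp (by omega)
  set Q : ℝ≥0∞ := ((2 * Fintype.card α - 1 : ℕ) : ℝ≥0∞)
  have hQ : Q ≠ 0 := Nat.cast_ne_zero.mpr (by omega)
  have hcard : (Fintype.card α : ℝ≥0∞) ≠ 0 := Nat.cast_ne_zero.mpr (by omega)
  rw [← ENNReal.mul_le_mul_iff_right (a := Fintype.card α * Q ^ K) (by simp [hQ, hcard])
    (by simp [Q, ENNReal.mul_eq_top])]
  calc Fintype.card α * Q ^ K * (2 * _) = 2 * Fintype.card α * Q ^ K * _ := by ring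
    _ ≤ ∑' x, conv (fun y => b (norm y)) (finInd (ball (α := α) (K + 1))) x ^ 2 :=
        mul_sum_sq_parityTailSum_le_tsum b K
    _ ≤ C * #(ball (K + 1)) := hweak _ ⟨1, mem_ball.mpr (by simp [norm_one])⟩
    _ ≤ C * (3 * Fintype.card α * (2 * Fintype.card α - 1) ^ K : ℕ) := by
        gcongr
        exact card_ball_succ_le hα K
    _ = Fintype.card α * Q ^ K * (3 * C) := by
        simp only [Nat.cast_mul, Nat.cast_pow, Nat.cast_ofNat, Q]
        ring

theorem tsum_mul_rpow_mul_one_add_min_le (hα : 2 ≤ Fintype.card α) (b : ℕ → ℝ≥0∞) (C : ℝ≥0∞)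
    (hweak : ∀ E : Finset (FreeGroup α), E.Nonempty →
      ∑' x, conv (fun y => b (norm y)) (finInd E) x ^ 2 ≤ C * #E) :
    ∑' p : ℕ × ℕ, b p.1 * b p.2 *
        ((2 * Fintype.card α - 1 : ℕ) : ℝ≥0∞) ^ (((p.1 : ℝ) + (p.2 : ℝ)) / 2) *
        ((1 + min p.1 p.2 : ℕ) : ℝ≥0∞) ≤ 6 * C := by
  set Q : ℝ≥0∞ := ((2 * Fintype.card α - 1 : ℕ) : ℝ≥0∞)
  set c : ℕ → ℝ≥0∞ := fun n => b n * Q ^ ((n : ℝ) / 2)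
  have hterm : ∀ n m : ℕ, b n * b m * Q ^ (((n : ℝ) + (m : ℝ)) / 2) * ((1 + min n m : ℕ) : ℝ≥0∞) =
      ((1 + min n m : ℕ) : ℝ≥0∞) * (c n * c m) := fun n m => by
    rw [add_div, ENNReal.rpow_add_of_nonneg _ _ (by positivity) (by positivity)]
    ring
  refine ENNReal.summable.tsum_le_of_sum_le fun s => ?_
  obtain ⟨K, hK⟩ := s.exists_subset_range_product
  calc ∑ p ∈ s, _ ≤ ∑ p ∈ range (K + 1) ×ˢ range (K + 1), b p.1 * b p.2 *
          Q ^ (((p.1 : ℝ) + (p.2 : ℝ)) / 2) * ((1 + min p.1 p.2 : ℕ) : ℝ≥0∞) :=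
        sum_le_sum_of_subset hK
    _ = ∑ n ∈ range (K + 1), ∑ m ∈ range (K + 1), ((1 + min n m : ℕ) : ℝ≥0∞) * (c n * c m) := by
        simp only [sum_product, hterm]
    _ = ∑ j ∈ range (K + 1), (∑ n ∈ Ico j (K + 1), c n) ^ 2 := sum_one_add_min_mul_eq_sum_sq c _
    _ ≤ 4 * ∑ j ∈ range (K + 1), parityTailSum c (K + 1) j ^ 2 := sum_sq_sum_Ico_le_four_mul c _
    _ = 2 * (2 * ∑ j ∈ range (K + 1), parityTailSum c (K + 1) j ^ 2) := by ring
    _ ≤ 2 * (3 * C) := by gcongr 2 * ?_; exact two_mul_sum_sq_parityTailSum_le hα b C hweak K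
    _ = 6 * C := by ring

end FreeGroup

theorem radial_weak_type_two_two_lower_general
    (r : ℕ) (hr : 2 ≤ r) (q : ℕ) (hq : q = 2 * r - 1)
    (a : ℕ → ℝ)
    (C : ℝ)
    (hweak : ∀ E : Finset (FreeGroup (Fin r)), E.Nonempty →
      ∑' x : FreeGroup (Fin r),
          (conv (fun y => ENNReal.ofReal (a (wlen y))) (finInd E) x) ^ 2
        ≤ ENNReal.ofReal C * (E.card : ℝ≥0∞))
    (A : ℝ≥0∞)
    (hA : A = ∑' p : ℕ × ℕ,
        ENNReal.ofReal (a p.1) * ENNReal.ofReal (a p.2) *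
          (q : ℝ≥0∞) ^ ((((p.1 : ℝ) + (p.2 : ℝ))) / 2) *
          ((1 + min p.1 p.2 : ℕ) : ℝ≥0∞)) :
    A ≠ ∞ ∧ A ≤ 6 * ENNReal.ofReal C := by
  have hle : A ≤ 6 * ENNReal.ofReal C := by
    have := FreeGroup.tsum_mul_rpow_mul_one_add_min_le (α := Fin r) (by simpa using hr)
      (fun n => ENNReal.ofReal (a n)) _ hweak
    rwa [Fintype.card_fin, ← hq, ← hA] at this
  exact ⟨ne_top_of_le_ne_top (by finiteness) hle, hle⟩

/-- If `Σ_x ((f∗χ_E)(x))² ≤ C |E|` for every finite nonempty `E`, for the radial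
function `f = Σ_n f_n χ_n` with nonnegative coefficients, then
`A(f) = Σ_{n,m} f_n f_m q^{(n+m)/2} (1 + min(n,m))` is finite and `A(f) ≤ 6 C`. -/
theorem radial_weak_type_two_two_lower
    (r : ℕ) (hr : 2 ≤ r) (q : ℕ) (hq : q = 2 * r - 1)
    (a : ℕ → ℝ) (ha : ∀ n, 0 ≤ a n)
    (C : ℝ)
    (hweak : ∀ E : Finset (FreeGroup (Fin r)), E.Nonempty →
      ∑' x : FreeGroup (Fin r),
          (conv (fun y => ENNReal.ofReal (a (wlen y))) (finInd E) x) ^ 2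
        ≤ ENNReal.ofReal C * (E.card : ℝ≥0∞))
    (A : ℝ≥0∞)
    (hA : A = ∑' p : ℕ × ℕ,
        ENNReal.ofReal (a p.1) * ENNReal.ofReal (a p.2) *
          (q : ℝ≥0∞) ^ ((((p.1 : ℝ) + (p.2 : ℝ))) / 2) *
          ((1 + min p.1 p.2 : ℕ) : ℝ≥0∞)) :
    A ≠ ∞ ∧ A ≤ 6 * ENNReal.ofReal C :=
  radial_weak_type_two_two_lower_general r hr q hq a C hweak A hA
end
end

section
/- Let 1 < p < 2 and p′ = p/(p−1). Let f = Σ_{n=0}^∞ f_n χ_n be a radial function on the free group F with f_n ≥ 0. If λ(f) is of weak type (p,p), i.e. there is a constant C such that t · (#{x ∈ F : (f∗g)(x) > t})^{1/p} ≤ C · ‖g‖_p for every finitely supported g : F → [0,∞) and every t > 0, then Σ_{n=0}^∞ f_n^{p′} q^{n p′/p} < ∞; moreover there is a constant c = c(p, q) > 0 with c · (Σ_{n=0}^∞ f_n^{p′} q^{n p′/p})^{1/p′} ≤ C. (Equivalently, c ‖f‖_{(p,p′)} ≤ ‖λ(f)‖_{p→(p,∞)}.) -/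
open scoped ENNReal

noncomputable section

/-- Convolution of real-valued functions on a group:
`(f ∗ g)(x) = Σ_y f(y) g(y⁻¹ x)`. -/
def convR {G : Type*} [Group G] (f g : G → ℝ) (x : G) : ℝ :=
  ∑' y, f y * g (y⁻¹ * x)

/-!
Fix `N`, write `f = a ∘ |·|`, and put `v n = a n q^{n/p}`, `S = ∑_{n ≤ N} v n ^ p'`. Test the
weak type inequality on the radial function `g` equal to `v (N - m) ^ (p' - 1) q^{-m/p}` on the
sphere of radius `m ≤ N` and vanishing outside the ball, the choice for which Hölder's inequality
is an equality. A point `x` with `|x| = N` factors as `y (y⁻¹ x)` through each of its `N + 1`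
prefixes `y`, with `|y| = n`, `|y⁻¹ x| = N - n`, so `(f ∗ g)(x) ≥ ∑_n a n g_{N-n} = q^{-N/p} S`
on the whole sphere of radius `N`, which has at least `q^N` points; on the other hand the sphere
of radius `m` has at most `2 q^m` points, so `‖g‖_p^p ≤ 2 S`. The weak type inequality at level
`t = q^{-N/p} S / 2` gives `S ≤ 4 C S^{1/p}`, i.e. `S^{1/p'} ≤ 4 C`, uniformly in `N`.
-/

open Finset

theorem two_mul_card_sub_one_pos {α : Type*} [Fintype α] [Nonempty α] :
    0 < 2 * Fintype.card α - 1 := by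
  have := Fintype.card_pos (α := α)
  omega

namespace FreeGroup

variable {α : Type*} [DecidableEq α]

section Sphere

variable [Fintype α]

/-- The letters that may precede `w` in a reduced word. -/
def nextLetters : List (α × Bool) → Finset (α × Bool)
  | [] => univ
  | d :: _ => univ.erase (d.1, !d.2)

theorem isReduced_cons_iff {c : α × Bool} {w : List (α × Bool)} :
    IsReduced (c :: w) ↔ c ∈ nextLetters w ∧ IsReduced w := by
  rcases w with _ | ⟨d, w⟩
  · simp [nextLetters, IsReduced.singleton, IsReduced.nil]
  · rw [isReduced_cons_cons]
    rcases c with ⟨c₁, c₂⟩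
    rcases d with ⟨d₁, d₂⟩
    simp only [nextLetters, mem_erase, mem_univ, and_true, ne_eq, Prod.mk.injEq]
    cases c₂ <;> cases d₂ <;> simp

def reducedWords : ℕ → Finset (List (α × Bool))
  | 0 => {[]}
  | n + 1 => ((reducedWords n).sigma fun w => nextLetters w).image fun cw => cw.2 :: cw.1

theorem cons_mem_reducedWords_succ {n : ℕ} {c : α × Bool} {w : List (α × Bool)} :
    c :: w ∈ reducedWords (n + 1) ↔ w ∈ reducedWords n ∧ c ∈ nextLetters w := by
  constructor
  · rintro h
    obtain ⟨⟨w', c'⟩, hmem, hcw⟩ := mem_image.1 h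
    obtain ⟨rfl, rfl⟩ := List.cons.inj hcw
    exact mem_sigma.1 hmem
  · rintro ⟨hw, hc⟩
    exact mem_image.2 ⟨⟨w, c⟩, mem_sigma.2 ⟨hw, hc⟩, rfl⟩

theorem mem_reducedWords {n : ℕ} {w : List (α × Bool)} :
    w ∈ reducedWords n ↔ IsReduced w ∧ w.length = n := by
  induction n generalizing w with
  | zero =>
    simp only [reducedWords, mem_singleton, List.length_eq_zero_iff, iff_and_self]
    rintro rfl
    exact IsReduced.nil
  | succ n ih =>
    rcases w with _ | ⟨c, w⟩
    · simp [reducedWords]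
    · rw [cons_mem_reducedWords_succ, ih, isReduced_cons_iff, List.length_cons,
        Nat.add_right_cancel_iff]
      tauto

theorem card_nextLetters_nil : #(nextLetters ([] : List (α × Bool))) = 2 * Fintype.card α := by
  simp [nextLetters, mul_comm]

theorem card_nextLetters_cons (d : α × Bool) (w : List (α × Bool)) :
    #(nextLetters (d :: w)) = 2 * Fintype.card α - 1 := by
  simp [nextLetters, card_erase_of_mem, mul_comm]

theorem card_reducedWords_succ (n : ℕ) :
    #(reducedWords (α := α) (n + 1)) = ∑ w ∈ reducedWords (α := α) n, #(nextLetters w) := by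
  rw [reducedWords, card_image_of_injective, card_sigma]
  rintro ⟨w, c⟩ ⟨w', c'⟩ h
  obtain ⟨rfl, rfl⟩ := List.cons.inj h
  rfl

theorem card_reducedWords_succ_eq (n : ℕ) :
    #(reducedWords (α := α) (n + 1)) = 2 * Fintype.card α * (2 * Fintype.card α - 1) ^ n := by
  induction n with
  | zero =>
    rw [card_reducedWords_succ, reducedWords, sum_singleton, card_nextLetters_nil, pow_zero,
      mul_one]
  | succ n ih =>
    have hcard : ∀ w ∈ reducedWords (α := α) (n + 1),
        #(nextLetters w) = 2 * Fintype.card α - 1 := by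
      intro w hw
      obtain ⟨d, w', rfl⟩ := List.exists_cons_of_length_eq_add_one (mem_reducedWords.1 hw).2
      exact card_nextLetters_cons d w'
    rw [card_reducedWords_succ, sum_congr rfl hcard, sum_const, smul_eq_mul, ih]
    ring

theorem image_toWord_sphere (n : ℕ) :
    toWord '' {x : FreeGroup α | wlen x = n} = (reducedWords n : Finset (List (α × Bool))) := by
  ext w
  simp only [Set.mem_image, Set.mem_ofPred_eq, mem_coe, mem_reducedWords]
  constructor
  · rintro ⟨x, hx, rfl⟩
    exact ⟨isReduced_toWord, hx⟩
  · rintro ⟨hw, hn⟩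
    exact ⟨mk w, by rw [wlen, toWord_mk, hw.reduce_eq, hn], by rw [toWord_mk, hw.reduce_eq]⟩

theorem encard_sphere (n : ℕ) :
    {x : FreeGroup α | wlen x = n}.encard = #(reducedWords (α := α) n) := by
  rw [← Set.encard_coe_eq_coe_finsetCard, ← image_toWord_sphere,
    toWord_injective.injOn.encard_image]

theorem pow_le_encard_sphere (n : ℕ) :
    (((2 * Fintype.card α - 1) ^ n : ℕ) : ℕ∞) ≤ {x : FreeGroup α | wlen x = n}.encard := by
  rw [encard_sphere, Nat.cast_le]
  rcases n with _ | n
  · simp [reducedWords]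
  · rw [card_reducedWords_succ_eq, pow_succ']
    exact Nat.mul_le_mul_right _ (by omega)

theorem encard_sphere_le [Nonempty α] (n : ℕ) :
    {x : FreeGroup α | wlen x = n}.encard ≤ ((2 * (2 * Fintype.card α - 1) ^ n : ℕ) : ℕ∞) := by
  rw [encard_sphere, Nat.cast_le]
  rcases n with _ | n
  · simp [reducedWords]
  · have := two_mul_card_sub_one_pos (α := α)
    rw [card_reducedWords_succ_eq, pow_succ', ← mul_assoc]
    exact Nat.mul_le_mul_right _ (by omega)

end Sphere

theorem tsum_comp_wlen (φ : ℕ → ℝ≥0∞) :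
    ∑' x : FreeGroup α, φ (wlen x)
      = ∑' n, ({x : FreeGroup α | wlen x = n}.encard : ℝ≥0∞) * φ n := by
  rw [← ENNReal.tsum_fiberwise _ wlen]
  refine tsum_congr fun n => ?_
  rw [← ENNReal.tsum_set_const]
  exact tsum_congr fun x => congrArg φ x.2

theorem tsum_comp_wlen_le [Fintype α] [Nonempty α] (φ : ℕ → ℝ≥0∞) :
    ∑' x : FreeGroup α, φ (wlen x)
      ≤ ∑' n, 2 * ((2 * Fintype.card α - 1 : ℕ) : ℝ≥0∞) ^ n * φ n := by
  rw [tsum_comp_wlen]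
  refine ENNReal.tsum_le_tsum fun n => mul_le_mul_left ?_ _
  simpa using ENat.toENNReal_le.2 (encard_sphere_le (α := α) n)

theorem toWord_mk_take (x : FreeGroup α) (n : ℕ) :
    (mk (x.toWord.take n)).toWord = x.toWord.take n := by
  rw [toWord_mk, (isReduced_toWord.infix (List.take_prefix n _).isInfix).reduce_eq]

theorem toWord_mk_drop (x : FreeGroup α) (n : ℕ) :
    (mk (x.toWord.drop n)).toWord = x.toWord.drop n := by
  rw [toWord_mk, (isReduced_toWord.infix (List.drop_suffix n _).isInfix).reduce_eq]

theorem wlen_mk_take {x : FreeGroup α} {n : ℕ} (hn : n ≤ wlen x) :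
    wlen (mk (x.toWord.take n)) = n := by
  rw [wlen, toWord_mk_take, List.length_take]
  exact min_eq_left hn

theorem wlen_inv_mk_take_mul (x : FreeGroup α) (n : ℕ) :
    wlen ((mk (x.toWord.take n))⁻¹ * x) = wlen x - n := by
  rw [inv_mul_eq_iff_eq_mul.2 (by rw [mul_mk, List.take_append_drop, mk_toWord]), wlen,
    toWord_mk_drop, List.length_drop, wlen]

theorem sum_le_convR_comp_wlen {a b : ℕ → ℝ} (ha : ∀ n, 0 ≤ a n) (hb : ∀ n, 0 ≤ b n)
    (hfin : (Function.support fun y : FreeGroup α => b (wlen y)).Finite) (x : FreeGroup α) :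
    ∑ n ∈ range (wlen x + 1), a n * b (wlen x - n)
      ≤ convR (fun y => a (wlen y)) (fun y => b (wlen y)) x := by
  set pre : ℕ → FreeGroup α := fun n => mk (x.toWord.take n)
  set F : FreeGroup α → ℝ := fun y => a (wlen y) * b (wlen (y⁻¹ * x))
  have hF : Summable F := by
    refine summable_of_hasFiniteSupport ((hfin.image fun z => x * z⁻¹).subset fun y hy => ?_)
    exact ⟨y⁻¹ * x, right_ne_zero_of_mul hy, by group⟩
  have hpre : Set.InjOn pre (range (wlen x + 1)) := fun n hn m hm h => by
    rw [coe_range, Set.mem_Iio] at hn hm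
    rw [← wlen_mk_take (Nat.le_of_lt_succ hn), ← wlen_mk_take (Nat.le_of_lt_succ hm)]
    exact congrArg wlen h
  calc ∑ n ∈ range (wlen x + 1), a n * b (wlen x - n)
      = ∑ n ∈ range (wlen x + 1), F (pre n) := by
        refine sum_congr rfl fun n hn => ?_
        rw [mem_range] at hn
        simp only [F, pre, wlen_mk_take (Nat.le_of_lt_succ hn), wlen_inv_mk_take_mul]
    _ = ∑ y ∈ (range (wlen x + 1)).image pre, F y := (sum_image hpre).symm
    _ ≤ ∑' y, F y := hF.sum_le_tsum _ fun y _ => mul_nonneg (ha _) (hb _)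

end FreeGroup

section Sequences

open Real

def weightedCoeff (a : ℕ → ℝ) (q p : ℝ) (n : ℕ) : ℝ := a n * q ^ ((n : ℝ) / p)

def testProfile (v : ℕ → ℝ) (q p p' : ℝ) (N m : ℕ) : ℝ :=
  if m ≤ N then v (N - m) ^ (p' - 1) * q ^ (-(m : ℝ) / p) else 0

variable {p p' q : ℝ}

theorem weightedCoeff_nonneg {a : ℕ → ℝ} (ha : ∀ n, 0 ≤ a n) (hq : 0 ≤ q) (n : ℕ) :
    0 ≤ weightedCoeff a q p n :=
  mul_nonneg (ha n) (rpow_nonneg hq _)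

theorem testProfile_nonneg {v : ℕ → ℝ} (hv : ∀ n, 0 ≤ v n) (hq : 0 ≤ q) (N m : ℕ) :
    0 ≤ testProfile v q p p' N m := by
  unfold testProfile
  split_ifs
  exacts [mul_nonneg (rpow_nonneg (hv _) _) (rpow_nonneg hq _), le_rfl]

theorem mul_testProfile_sub (hpp : p.HolderConjugate p') {a : ℕ → ℝ} (ha : ∀ n, 0 ≤ a n)
    (hq : 0 < q) {N n : ℕ} (hn : n ≤ N) :
    a n * testProfile (weightedCoeff a q p) q p p' N (N - n)
      = q ^ (-(N : ℝ) / p) * weightedCoeff a q p n ^ p' := by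
  set v := weightedCoeff a q p
  have ha_eq : a n = v n * q ^ (-(n : ℝ) / p) := by
    rw [show v n = a n * q ^ ((n : ℝ) / p) from rfl, mul_assoc, ← rpow_add hq, neg_div,
      add_neg_cancel, rpow_zero, mul_one]
  rw [testProfile, if_pos (Nat.sub_le N n), Nat.sub_sub_self hn, ha_eq]
  calc v n * q ^ (-(n : ℝ) / p) * (v n ^ (p' - 1) * q ^ (-((N - n : ℕ) : ℝ) / p))
      = (v n * v n ^ (p' - 1)) * (q ^ (-(n : ℝ) / p) * q ^ (-((N - n : ℕ) : ℝ) / p)) := by ring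
    _ = q ^ (-(N : ℝ) / p) * v n ^ p' := by
      rw [← rpow_one_add' (weightedCoeff_nonneg ha hq.le n) (by simpa using hpp.symm.ne_zero),
        ← rpow_add hq, Nat.cast_sub hn, add_sub_cancel, mul_comm]
      congr 2
      ring

theorem pow_mul_testProfile_rpow (hpp : p.HolderConjugate p') {v : ℕ → ℝ} (hv : ∀ n, 0 ≤ v n)
    (hq : 0 < q) {N m : ℕ} (hm : m ≤ N) :
    q ^ m * testProfile v q p p' N m ^ p = v (N - m) ^ p' := by
  rw [testProfile, if_pos hm, mul_rpow (rpow_nonneg (hv _) _) (rpow_nonneg hq.le _),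
    ← rpow_mul (hv _), ← rpow_mul hq.le, hpp.symm.sub_one_mul_conj, mul_left_comm,
    div_mul_cancel₀ _ hpp.ne_zero, rpow_neg hq.le, rpow_natCast, mul_inv_cancel₀ (by positivity),
    mul_one]

end Sequences

theorem ofReal_weightedCoeff_rpow {p p' : ℝ} {q : ℕ} (hpp : p.HolderConjugate p') {a : ℕ → ℝ}
    (ha : ∀ n, 0 ≤ a n) (hq : 0 < q) (n : ℕ) :
    ENNReal.ofReal (weightedCoeff a q p n ^ p')
      = ENNReal.ofReal (a n) ^ p' * (q : ℝ≥0∞) ^ ((n : ℝ) * p' / p) := by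
  have hq0 : (0 : ℝ) < q := Nat.cast_pos.2 hq
  rw [weightedCoeff, Real.mul_rpow (ha n) (Real.rpow_nonneg hq0.le _), ← Real.rpow_mul hq0.le,
    ENNReal.ofReal_mul (Real.rpow_nonneg (ha n) _),
    ← ENNReal.ofReal_rpow_of_nonneg (ha n) hpp.symm.nonneg, ← ENNReal.ofReal_rpow_of_pos hq0,
    ENNReal.ofReal_natCast, div_mul_eq_mul_div]

theorem ENNReal.le_rpow_of_le_mul_rpow_inv {s K : ℝ≥0∞} {p p' : ℝ} (hpp : p.HolderConjugate p')
    (hs : s ≠ ∞) (h : s ≤ K * s ^ p⁻¹) : s ≤ K ^ p' := by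
  rcases eq_or_ne s 0 with rfl | hs0
  · exact zero_le
  have hsp : s ^ p⁻¹ ≠ 0 := (ENNReal.rpow_pos (pos_iff_ne_zero.2 hs0) hs).ne'
  have hsp' : s ^ p⁻¹ ≠ ∞ := ENNReal.rpow_ne_top_of_nonneg (inv_nonneg.2 hpp.nonneg) hs
  have hroot : s ^ p'⁻¹ ≤ K := by
    rwa [← ENNReal.mul_le_mul_iff_left hsp hsp', ← ENNReal.rpow_add _ _ hs0 hs,
      hpp.symm.inv_add_inv_eq_one, ENNReal.rpow_one]
  calc s = (s ^ p'⁻¹) ^ p' := by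
        rw [← ENNReal.rpow_mul, inv_mul_cancel₀ hpp.symm.ne_zero, ENNReal.rpow_one]
    _ ≤ K ^ p' := ENNReal.rpow_le_rpow hroot hpp.symm.nonneg

def HasWeakTypeConv {G : Type*} [Group G] (p : ℝ) (f : G → ℝ) (C : ℝ) : Prop :=
  ∀ g : G → ℝ, (∀ x, 0 ≤ g x) → (Function.support g).Finite → ∀ t : ℝ, 0 < t →
    ENNReal.ofReal t * ({x | t < convR f g x}.encard : ℝ≥0∞) ^ (1 / p)
      ≤ ENNReal.ofReal C * (∑' x, ENNReal.ofReal (g x) ^ p) ^ (1 / p)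

namespace FreeGroup

variable {α : Type*} [DecidableEq α]

section Finite

variable [Finite α] {p p' : ℝ}

theorem finite_support_testProfile_comp_wlen (v : ℕ → ℝ) (q : ℝ) (N : ℕ) :
    (Function.support fun y : FreeGroup α => testProfile v q p p' N (wlen y)).Finite :=
  ((List.finite_length_le _ N).preimage toWord_injective.injOn).subset fun _ hy => by
    by_contra h
    exact hy (if_neg h)

theorem sphere_subset_lt_convR_testProfile (hpp : p.HolderConjugate p') {a : ℕ → ℝ}
    (ha : ∀ n, 0 ≤ a n) {q : ℝ} (hq : 0 < q) {N : ℕ} {t : ℝ}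
    (ht : t < q ^ (-(N : ℝ) / p) * ∑ n ∈ range (N + 1), weightedCoeff a q p n ^ p') :
    {x : FreeGroup α | wlen x = N} ⊆ {x | t < convR (fun y => a (wlen y))
      (fun y => testProfile (weightedCoeff a q p) q p p' N (wlen y)) x} := by
  intro x hx
  rw [Set.mem_ofPred_eq] at hx ⊢
  calc t < q ^ (-(N : ℝ) / p) * ∑ n ∈ range (N + 1), weightedCoeff a q p n ^ p' := ht
    _ = ∑ n ∈ range (N + 1), a n * testProfile (weightedCoeff a q p) q p p' N (N - n) := by
        rw [mul_sum]
        exact sum_congr rfl fun n hn =>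
          (mul_testProfile_sub hpp ha hq (Nat.lt_succ_iff.1 (mem_range.1 hn))).symm
    _ ≤ _ := by
        simpa only [hx] using sum_le_convR_comp_wlen ha
          (testProfile_nonneg (weightedCoeff_nonneg ha hq.le) hq.le N)
          (finite_support_testProfile_comp_wlen _ q N) x

end Finite

variable [Fintype α] [Nonempty α] {q : ℕ} {p p' : ℝ}

theorem tsum_ofReal_testProfile_rpow_le (hq : q = 2 * Fintype.card α - 1)
    (hpp : p.HolderConjugate p') {v : ℕ → ℝ} (hv : ∀ n, 0 ≤ v n) (N : ℕ) :
    ∑' x : FreeGroup α, ENNReal.ofReal (testProfile v q p p' N (wlen x)) ^ p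
      ≤ ENNReal.ofReal (2 * ∑ n ∈ range (N + 1), v n ^ p') := by
  have hq0 : (0 : ℝ) < q := Nat.cast_pos.2 (hq ▸ two_mul_card_sub_one_pos)
  calc ∑' x : FreeGroup α, ENNReal.ofReal (testProfile v q p p' N (wlen x)) ^ p
      ≤ ∑' m, 2 * (q : ℝ≥0∞) ^ m * ENNReal.ofReal (testProfile v q p p' N m) ^ p := by
        subst hq; exact tsum_comp_wlen_le _
    _ = ∑ m ∈ range (N + 1),
          2 * (q : ℝ≥0∞) ^ m * ENNReal.ofReal (testProfile v q p p' N m) ^ p := by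
        refine tsum_eq_sum fun m hm => ?_
        rw [testProfile, if_neg (by simpa [Nat.lt_succ_iff] using hm), ENNReal.ofReal_zero,
          ENNReal.zero_rpow_of_pos hpp.pos, mul_zero]
    _ = ∑ m ∈ range (N + 1), ENNReal.ofReal (2 * v (N - m) ^ p') := by
        refine sum_congr rfl fun m hm => ?_
        rw [← pow_mul_testProfile_rpow hpp hv hq0 (Nat.lt_succ_iff.1 (mem_range.1 hm)),
          ENNReal.ofReal_mul zero_le_two, ENNReal.ofReal_mul (by positivity),
          ENNReal.ofReal_pow hq0.le, ENNReal.ofReal_natCast, ENNReal.ofReal_ofNat,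
          ENNReal.ofReal_rpow_of_nonneg (testProfile_nonneg hv hq0.le N m) hpp.nonneg, mul_assoc]
    _ = ENNReal.ofReal (2 * ∑ n ∈ range (N + 1), v n ^ p') := by
        rw [← ENNReal.ofReal_sum_of_nonneg fun m _ => by have := hv (N - m); positivity,
          ← mul_sum]
        congr 2
        simpa using sum_range_reflect (fun n => v n ^ p') (N + 1)

theorem ofReal_mul_rpow_le_of_hasWeakTypeConv (hq : q = 2 * Fintype.card α - 1) (hp : 0 < p)
    {f g : FreeGroup α → ℝ} {C : ℝ} (hw : HasWeakTypeConv p f C) (hg : ∀ x, 0 ≤ g x)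
    (hgfin : (Function.support g).Finite) {t : ℝ} (ht : 0 < t) {N : ℕ}
    (hN : {x : FreeGroup α | wlen x = N} ⊆ {x | t < convR f g x}) :
    ENNReal.ofReal (t * (q : ℝ) ^ ((N : ℝ) / p))
      ≤ ENNReal.ofReal C * (∑' x, ENNReal.ofReal (g x) ^ p) ^ (1 / p) := by
  have hcount : (q : ℝ≥0∞) ^ N ≤ {x | t < convR f g x}.encard := by
    have := (pow_le_encard_sphere (α := α) N).trans (Set.encard_le_encard hN)
    rw [← hq] at this
    exact_mod_cast ENat.toENNReal_le.2 this
  have hpow : ENNReal.ofReal ((q : ℝ) ^ ((N : ℝ) / p)) = ((q : ℝ≥0∞) ^ N) ^ (1 / p) := by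
    rw [← ENNReal.rpow_natCast, ← ENNReal.rpow_mul, ← ENNReal.ofReal_natCast,
      ENNReal.ofReal_rpow_of_pos (Nat.cast_pos.2 (hq ▸ two_mul_card_sub_one_pos)), mul_one_div]
  calc ENNReal.ofReal (t * (q : ℝ) ^ ((N : ℝ) / p))
      = ENNReal.ofReal t * ((q : ℝ≥0∞) ^ N) ^ (1 / p) := by rw [ENNReal.ofReal_mul ht.le, hpow]
    _ ≤ ENNReal.ofReal t * ({x | t < convR f g x}.encard : ℝ≥0∞) ^ (1 / p) := by
        gcongr
    _ ≤ _ := hw g hg hgfin t ht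

theorem ofReal_sum_rpow_le_mul_rpow_inv (hq : q = 2 * Fintype.card α - 1)
    (hpp : p.HolderConjugate p') {a : ℕ → ℝ} (ha : ∀ n, 0 ≤ a n) {C : ℝ}
    (hw : HasWeakTypeConv p (fun y : FreeGroup α => a (wlen y)) C) (N : ℕ) :
    ENNReal.ofReal (∑ n ∈ range (N + 1), weightedCoeff a q p n ^ p')
      ≤ 4 * ENNReal.ofReal C
        * ENNReal.ofReal (∑ n ∈ range (N + 1), weightedCoeff a q p n ^ p') ^ p⁻¹ := by
  have hq0 : (0 : ℝ) < q := Nat.cast_pos.2 (hq ▸ two_mul_card_sub_one_pos)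
  have hv : ∀ n, 0 ≤ weightedCoeff a q p n := weightedCoeff_nonneg ha hq0.le
  set S := ∑ n ∈ range (N + 1), weightedCoeff a q p n ^ p'
  have hS0 : 0 ≤ S := sum_nonneg fun n _ => Real.rpow_nonneg (hv n) p'
  rcases hS0.eq_or_lt with hS | hS
  · rw [← hS, ENNReal.ofReal_zero]
    exact zero_le
  set t := (q : ℝ) ^ (-(N : ℝ) / p) * S / 2
  have hqN : t * (q : ℝ) ^ ((N : ℝ) / p) = S / 2 := by
    rw [div_mul_eq_mul_div, mul_right_comm, neg_div, Real.rpow_neg hq0.le,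
      inv_mul_cancel₀ (by positivity), one_mul]
  have hweak := ofReal_mul_rpow_le_of_hasWeakTypeConv hq hpp.pos hw
    (fun y => testProfile_nonneg hv hq0.le N (wlen y))
    (finite_support_testProfile_comp_wlen _ q N) (by positivity)
    (sphere_subset_lt_convR_testProfile hpp ha hq0 (half_lt_self (by positivity)))
  have htwo : (2 : ℝ≥0∞) ^ p⁻¹ ≤ 2 := by
    simpa using ENNReal.rpow_le_rpow_of_exponent_le one_le_two (inv_le_one_of_one_le₀ hpp.lt.le)
  calc ENNReal.ofReal S = 2 * ENNReal.ofReal (t * (q : ℝ) ^ ((N : ℝ) / p)) := by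
        rw [hqN, ← ENNReal.ofReal_ofNat 2, ← ENNReal.ofReal_mul zero_le_two]
        congr 1
        ring
    _ ≤ 2 * (ENNReal.ofReal C * ENNReal.ofReal (2 * S) ^ (1 / p)) := by
        gcongr 2 * ?_
        exact hweak.trans (by gcongr; exacts [hpp.one_div_nonneg,
          tsum_ofReal_testProfile_rpow_le hq hpp hv N])
    _ = 2 * (ENNReal.ofReal C * ((2 : ℝ≥0∞) ^ p⁻¹ * ENNReal.ofReal S ^ p⁻¹)) := by
        rw [ENNReal.ofReal_mul zero_le_two, ENNReal.mul_rpow_of_nonneg _ _ hpp.one_div_nonneg,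
          ENNReal.ofReal_ofNat, one_div]
    _ ≤ 2 * (ENNReal.ofReal C * (2 * ENNReal.ofReal S ^ p⁻¹)) := by gcongr
    _ = 4 * ENNReal.ofReal C * ENNReal.ofReal S ^ p⁻¹ := by ring

theorem tsum_le_of_hasWeakTypeConv (hq : q = 2 * Fintype.card α - 1)
    (hpp : p.HolderConjugate p') {a : ℕ → ℝ} (ha : ∀ n, 0 ≤ a n) {C : ℝ}
    (hw : HasWeakTypeConv p (fun y : FreeGroup α => a (wlen y)) C) :
    ∑' n : ℕ, ENNReal.ofReal (a n) ^ p' * (q : ℝ≥0∞) ^ ((n : ℝ) * p' / p)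
      ≤ (4 * ENNReal.ofReal C) ^ p' := by
  have hq0 : 0 < q := hq ▸ two_mul_card_sub_one_pos
  have hv : ∀ n, 0 ≤ weightedCoeff a q p n := weightedCoeff_nonneg ha (Nat.cast_nonneg q)
  simp_rw [← ofReal_weightedCoeff_rpow hpp ha hq0]
  refine ENNReal.tsum_le_of_sum_range_le fun N => ?_
  calc ∑ n ∈ range N, ENNReal.ofReal (weightedCoeff a q p n ^ p')
      ≤ ∑ n ∈ range (N + 1), ENNReal.ofReal (weightedCoeff a q p n ^ p') :=
        sum_le_sum_of_subset (range_subset_range.2 N.le_succ)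
    _ = ENNReal.ofReal (∑ n ∈ range (N + 1), weightedCoeff a q p n ^ p') :=
        (ENNReal.ofReal_sum_of_nonneg fun n _ => Real.rpow_nonneg (hv n) p').symm
    _ ≤ (4 * ENNReal.ofReal C) ^ p' :=
        ENNReal.le_rpow_of_le_mul_rpow_inv hpp ENNReal.ofReal_ne_top
          (ofReal_sum_rpow_le_mul_rpow_inv hq hpp ha hw N)

end FreeGroup

theorem radial_weak_type_p_lower_general
    (r : ℕ) (hr : 2 ≤ r) (q : ℕ) (hq : q = 2 * r - 1)
    (p : ℝ) (hp1 : 1 < p) (p' : ℝ) (hp' : p' = p / (p - 1)) :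
    ∃ c : ℝ, 0 < c ∧
      ∀ (a : ℕ → ℝ), (∀ n, 0 ≤ a n) →
      ∀ C : ℝ,
        (∀ g : FreeGroup (Fin r) → ℝ, (∀ x, 0 ≤ g x) → (Function.support g).Finite →
          ∀ t : ℝ, 0 < t →
            ENNReal.ofReal t *
                ({x : FreeGroup (Fin r) |
                    t < convR (fun y => a (wlen y)) g x}.encard : ℝ≥0∞) ^ (1 / p)
              ≤ ENNReal.ofReal C *
                  (∑' x : FreeGroup (Fin r), ENNReal.ofReal (g x) ^ p) ^ (1 / p)) →
        (∑' n : ℕ, ENNReal.ofReal (a n) ^ p' * (q : ℝ≥0∞) ^ ((n : ℝ) * p' / p)) ≠ ∞ ∧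
        ENNReal.ofReal c *
            (∑' n : ℕ, ENNReal.ofReal (a n) ^ p' *
              (q : ℝ≥0∞) ^ ((n : ℝ) * p' / p)) ^ (1 / p')
          ≤ ENNReal.ofReal C := by
  have hpp : p.HolderConjugate p' := (Real.holderConjugate_iff_eq_conjExponent hp1).2 hp'
  have : Nonempty (Fin r) := ⟨⟨0, by omega⟩⟩
  refine ⟨1 / 4, by norm_num, fun a ha C hw => ?_⟩
  have hT := FreeGroup.tsum_le_of_hasWeakTypeConv (q := q) (by rwa [Fintype.card_fin]) hpp ha hw
  have hB : (4 * ENNReal.ofReal C) ^ p' ≠ ∞ :=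
    ENNReal.rpow_ne_top_of_nonneg hpp.symm.nonneg (by finiteness)
  refine ⟨ne_top_of_le_ne_top hB hT, ?_⟩
  calc ENNReal.ofReal (1 / 4) * (∑' n : ℕ, ENNReal.ofReal (a n) ^ p' *
        (q : ℝ≥0∞) ^ ((n : ℝ) * p' / p)) ^ (1 / p')
      ≤ ENNReal.ofReal (1 / 4) * ((4 * ENNReal.ofReal C) ^ p') ^ (1 / p') := by
        gcongr
        exact hpp.symm.one_div_nonneg
    _ = ENNReal.ofReal C := by
        rw [← ENNReal.rpow_mul, mul_one_div_cancel hpp.symm.ne_zero, ENNReal.rpow_one,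
          ← mul_assoc, ENNReal.ofReal_div_of_pos four_pos, ENNReal.ofReal_one, ENNReal.ofReal_ofNat,
          one_div, ENNReal.inv_mul_cancel four_ne_zero (by finiteness), one_mul]

/-- Weak type `(p,p)` lower bound, `1 < p < 2`: there is `c = c(p,q) > 0` such that if
the radial convolution operator with nonnegative coefficients `f_n` satisfies
`t (#{x : (f∗g)(x) > t})^{1/p} ≤ C ‖g‖_p` for all finitely supported `g ≥ 0` and `t > 0`,
then `Σ_n f_n^{p'} q^{n p'/p} < ∞` and `c (Σ_n f_n^{p'} q^{n p'/p})^{1/p'} ≤ C`. -/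
theorem radial_weak_type_p_lower
    (r : ℕ) (hr : 2 ≤ r) (q : ℕ) (hq : q = 2 * r - 1)
    (p : ℝ) (hp1 : 1 < p) (hp2 : p < 2) (p' : ℝ) (hp' : p' = p / (p - 1)) :
    ∃ c : ℝ, 0 < c ∧
      ∀ (a : ℕ → ℝ), (∀ n, 0 ≤ a n) →
      ∀ C : ℝ,
        (∀ g : FreeGroup (Fin r) → ℝ, (∀ x, 0 ≤ g x) → (Function.support g).Finite →
          ∀ t : ℝ, 0 < t →
            ENNReal.ofReal t *
                ({x : FreeGroup (Fin r) |
                    t < convR (fun y => a (wlen y)) g x}.encard : ℝ≥0∞) ^ (1 / p)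
              ≤ ENNReal.ofReal C *
                  (∑' x : FreeGroup (Fin r), ENNReal.ofReal (g x) ^ p) ^ (1 / p)) →
        (∑' n : ℕ, ENNReal.ofReal (a n) ^ p' * (q : ℝ≥0∞) ^ ((n : ℝ) * p' / p)) ≠ ∞ ∧
        ENNReal.ofReal c *
            (∑' n : ℕ, ENNReal.ofReal (a n) ^ p' *
              (q : ℝ≥0∞) ^ ((n : ℝ) * p' / p)) ^ (1 / p')
          ≤ ENNReal.ofReal C :=
  radial_weak_type_p_lower_general r hr q hq p hp1 p' hp'
end
end

section
/- Let G be a (discrete) group satisfying the Følner condition: for every ε > 0 and every finite K ⊆ G there exists a finite nonempty N ⊆ G with |xN △ N| < ε |N| for all x ∈ K. Then for every finitely supported symmetric probability measure μ on G (μ ≥ 0, Σ_x μ(x) = 1, μ(x⁻¹) = μ(x)), the supremum over finite nonempty sets N, M ⊆ G of ⟨μ ∗ χ_N, χ_M⟩ / (|N|^{1/2} |M|^{1/2}) equals 1. -/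
/-! If `μ` is a probability measure, `⟨μ ∗ χ_N, χ_M⟩ = Σₓ μ(x) |xN ∩ M|` is an average of the
numbers `|xN ∩ M| ≤ min(|N|, |M|) ≤ |N|^{1/2} |M|^{1/2}`, so every ratio is at most `1`.
Conversely, for `M = N` a Følner set for the support of `μ`, each `|xN ∩ N|` is at least
`|N| - |xN △ N| > (1 - ε) |N|`, so the ratio with `|N|^{1/2} |N|^{1/2} = |N|` exceeds `1 - ε`. -/

open scoped symmDiff

noncomputable section

open Finset

lemma sum_toFinset_support_mul_const {α : Type*} {μ : α → ℝ} (hμfin : (Function.support μ).Finite)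
    (hμsum : ∑' x : α, μ x = 1) (c : ℝ) : ∑ x ∈ hμfin.toFinset, μ x * c = c := by
  rw [← sum_mul, (tsum_eq_sum' hμfin.coe_toFinset.ge).symm.trans hμsum, one_mul]

section

variable {G : Type*} [Group G] [DecidableEq G]

/-- The pairing `⟨μ ∗ χ_N, χ_M⟩`. -/
def convolutionPairing (μ : G → ℝ) (N M : Finset G) : ℝ :=
  ∑ y ∈ M, ∑' x : G, μ x * (if x⁻¹ * y ∈ N then (1 : ℝ) else 0)

lemma convolutionPairing_eq_sum_card {μ : G → ℝ} {S : Finset G}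
    (hS : Function.support μ ⊆ S) (N M : Finset G) :
    convolutionPairing μ N M = ∑ x ∈ S, μ x * #{y ∈ M | x⁻¹ * y ∈ N} := by
  have hfin : ∀ y, ∑' x : G, μ x * (if x⁻¹ * y ∈ N then (1 : ℝ) else 0) =
      ∑ x ∈ S, μ x * (if x⁻¹ * y ∈ N then (1 : ℝ) else 0) := fun y =>
    tsum_eq_sum' ((Function.support_mul_subset_left _ _).trans hS)
  simp only [convolutionPairing, hfin]
  rw [sum_comm]
  simp only [← mul_sum, sum_boole]

lemma card_filter_inv_mul_mem_le_card (x : G) (N M : Finset G) :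
    #{y ∈ M | x⁻¹ * y ∈ N} ≤ #N :=
  card_le_card_of_injOn (x⁻¹ * ·) (fun _ hy => (mem_filter.mp hy).2)
    (fun _ _ _ _ h => mul_left_cancel h)

lemma card_filter_inv_mul_mem_le_sqrt_mul_sqrt (x : G) (N M : Finset G) :
    (#{y ∈ M | x⁻¹ * y ∈ N} : ℝ) ≤ √(#N : ℝ) * √(#M : ℝ) := by
  rw [← Real.sqrt_mul (Nat.cast_nonneg _), Real.le_sqrt (Nat.cast_nonneg _) (by positivity), sq]
  exact_mod_cast Nat.mul_le_mul (card_filter_inv_mul_mem_le_card x N M) (card_filter_le _ _)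

lemma card_le_card_filter_add_card_symmDiff (x : G) (N : Finset G) :
    #N ≤ #{y ∈ N | x⁻¹ * y ∈ N} + #(N.image (fun y => x * y) ∆ N) := by
  rw [← card_filter_add_card_filter_not (fun y => x⁻¹ * y ∈ N) (s := N)]
  gcongr
  intro y hy
  obtain ⟨hyN, hxy⟩ := mem_filter.mp hy
  refine mem_symmDiff.mpr (Or.inr ⟨hyN, fun hyx => hxy ?_⟩)
  obtain ⟨z, hz, rfl⟩ := mem_image.mp hyx
  simpa using hz

section ProbabilityMeasure

variable {μ : G → ℝ} (hμ0 : ∀ x, 0 ≤ μ x) (hμfin : (Function.support μ).Finite)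
  (hμsum : ∑' x : G, μ x = 1)
include hμ0 hμfin hμsum

lemma convolutionPairing_le (N M : Finset G) :
    convolutionPairing μ N M ≤ √(#N : ℝ) * √(#M : ℝ) := by
  rw [convolutionPairing_eq_sum_card hμfin.coe_toFinset.ge]
  calc ∑ x ∈ hμfin.toFinset, μ x * #{y ∈ M | x⁻¹ * y ∈ N}
      ≤ ∑ x ∈ hμfin.toFinset, μ x * (√(#N : ℝ) * √(#M : ℝ)) := by
        gcongr with x
        · exact hμ0 x
        · exact card_filter_inv_mul_mem_le_sqrt_mul_sqrt x N M
    _ = √(#N : ℝ) * √(#M : ℝ) := sum_toFinset_support_mul_const hμfin hμsum _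

lemma one_sub_mul_card_le_convolutionPairing {ε : ℝ} {N : Finset G}
    (hN : ∀ x ∈ hμfin.toFinset, (#(N.image (fun y => x * y) ∆ N) : ℝ) < ε * #N) :
    (1 - ε) * #N ≤ convolutionPairing μ N N := by
  rw [convolutionPairing_eq_sum_card hμfin.coe_toFinset.ge,
    ← sum_toFinset_support_mul_const hμfin hμsum ((1 - ε) * #N)]
  gcongr with x hx
  · exact hμ0 x
  · have hcard : (#N : ℝ) ≤ #{y ∈ N | x⁻¹ * y ∈ N} + #(N.image (fun y => x * y) ∆ N) := by
      exact_mod_cast card_le_card_filter_add_card_symmDiff x N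
    linarith [hN x hx]

end ProbabilityMeasure

end

theorem folner_convolution_sup_eq_one_general {G : Type*} [Group G] [DecidableEq G]
    (hFol : ∀ ε : ℝ, 0 < ε → ∀ K : Finset G, ∃ N : Finset G, N.Nonempty ∧
      ∀ x ∈ K, (((N.image (fun y => x * y)) ∆ N).card : ℝ) < ε * N.card)
    (μ : G → ℝ) (hμ0 : ∀ x, 0 ≤ μ x) (hμfin : (Function.support μ).Finite)
    (hμsum : ∑' x : G, μ x = 1) :
    sSup {t : ℝ | ∃ N M : Finset G, N.Nonempty ∧ M.Nonempty ∧
        t = (∑ y ∈ M, ∑' x : G, μ x * (if x⁻¹ * y ∈ N then (1 : ℝ) else 0)) /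
            (Real.sqrt N.card * Real.sqrt M.card)} = 1 := by
  change sSup {t : ℝ | ∃ N M : Finset G, N.Nonempty ∧ M.Nonempty ∧
    t = convolutionPairing μ N M / (√(#N : ℝ) * √(#M : ℝ))} = 1
  refine csSup_eq_of_forall_le_of_forall_lt_exists_gt
    ⟨_, {1}, {1}, singleton_nonempty _, singleton_nonempty _, rfl⟩ ?_ ?_
  · rintro t ⟨N, M, -, -, rfl⟩
    exact div_le_one_of_le₀ (convolutionPairing_le hμ0 hμfin hμsum N M) (by positivity)
  · intro w hw
    obtain ⟨N, hN, hNfol⟩ := hFol ((1 - w) / 2) (by linarith) hμfin.toFinset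
    have hNpos : (0 : ℝ) < #N := by exact_mod_cast hN.card_pos
    refine ⟨_, ⟨N, N, hN, hN, rfl⟩, ?_⟩
    rw [Real.mul_self_sqrt hNpos.le, lt_div_iff₀ hNpos]
    calc w * #N < (1 - (1 - w) / 2) * #N := by gcongr; linarith
      _ ≤ convolutionPairing μ N N := one_sub_mul_card_le_convolutionPairing hμ0 hμfin hμsum hNfol

/-- If a group satisfies the Følner condition, then for every finitely supported
symmetric probability measure `μ` the supremum over finite nonempty sets `N, M` of
`⟨μ ∗ χ_N, χ_M⟩ / (|N|^{1/2} |M|^{1/2})` equals `1`. -/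
theorem folner_convolution_sup_eq_one {G : Type*} [Group G] [DecidableEq G]
    (hFol : ∀ ε : ℝ, 0 < ε → ∀ K : Finset G, ∃ N : Finset G, N.Nonempty ∧
      ∀ x ∈ K, (((N.image (fun y => x * y)) ∆ N).card : ℝ) < ε * N.card)
    (μ : G → ℝ) (hμ0 : ∀ x, 0 ≤ μ x) (hμfin : (Function.support μ).Finite)
    (hμsum : ∑' x : G, μ x = 1) (hμsymm : ∀ x, μ x⁻¹ = μ x) :
    sSup {t : ℝ | ∃ N M : Finset G, N.Nonempty ∧ M.Nonempty ∧
        t = (∑ y ∈ M, ∑' x : G, μ x * (if x⁻¹ * y ∈ N then (1 : ℝ) else 0)) /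
            (Real.sqrt N.card * Real.sqrt M.card)} = 1 :=
  folner_convolution_sup_eq_one_general hFol μ hμ0 hμfin hμsum
end
end
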